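/- arXiv:2101.06178 — 4 statements merged into one kernel-verified Lean document; each statement's English description precedes it below -/
import Mathlib

section
/- Let n ∈ ℕ, M an n×n symmetric real matrix with zero diagonal, θ ∈ ℝⁿ, and let X ∼ I_{(M,θ)}. Then for every pair of distinct vertices v ≠ u in [n] and every x ∈ {−1,1}ⁿ, |P[X_v = 1 | X_u = 1, X_{−{v,u}} = x_{−{v,u}}] − P[X_v = 1 | X_u = −1, X_{−{v,u}} = x_{−{v,u}}]| ≤ tanh(|M_{v,u}|) ≤ |M_{v,u}|. -/
/-!
Given all spins except the one at `v`, the spin at `v` is `+1` with probability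
`(1 + tanh h) / 2`, where `h = θ v + ∑ j, M v j x_j` is the local field at `v`; the zero
diagonal makes `h` independent of `x_v`, and symmetry of `M` is what makes flipping `x_v`
change the energy by exactly `2 h`. Flipping the spin at `u` shifts `h` by `2 M v u`, so the
two conditional probabilities differ by `(tanh (a + m) - tanh (a - m)) / 2` with `m = M v u`.
This equals `sinh (2 m) / (2 cosh (a + m) cosh (a - m))`, and
`cosh (a + m) cosh (a - m) = cosh² a + sinh² m ≥ cosh² m` bounds it by `tanh |m|`.
-/

open Finset Real
open scoped Classical

noncomputable section

/-- The real spin value (`±1`) of a Boolean configuration entry. -/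
def spin (s : Bool) : ℝ := if s then 1 else -1

/-- The unnormalized Ising weight `exp(θ·x + ½ x·Mx)` of a configuration. -/
def isingWt {n : ℕ} (M : Matrix (Fin n) (Fin n) ℝ) (θ : Fin n → ℝ) (σ : Fin n → Bool) : ℝ :=
  Real.exp ((∑ i, θ i * spin (σ i)) + (1 / 2) * ∑ i, ∑ j, spin (σ i) * M i j * spin (σ j))

/-- The Ising probability of a single configuration. -/
def isingProb {n : ℕ} (M : Matrix (Fin n) (Fin n) ℝ) (θ : Fin n → ℝ) (σ : Fin n → Bool) : ℝ :=
  isingWt M θ σ / ∑ τ : Fin n → Bool, isingWt M θ τ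

/-- The Ising probability of an event `A`. -/
def isingPr {n : ℕ} (M : Matrix (Fin n) (Fin n) ℝ) (θ : Fin n → ℝ)
    (A : (Fin n → Bool) → Prop) : ℝ :=
  ∑ σ ∈ Finset.univ.filter (fun σ => A σ), isingProb M θ σ

/-- The Ising conditional probability `P[A | B]`. -/
def isingCond {n : ℕ} (M : Matrix (Fin n) (Fin n) ℝ) (θ : Fin n → ℝ)
    (A B : (Fin n → Bool) → Prop) : ℝ :=
  isingPr M θ (fun σ => A σ ∧ B σ) / isingPr M θ B

open Function Matrix

section Hyperbolic

lemma tanh_le_self {x : ℝ} (hx : 0 ≤ x) : tanh x ≤ x := by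
  have hderiv (y : ℝ) :
      HasDerivAt (fun y ↦ y * cosh y - sinh y) (y * sinh y) y :=
    ((hasDerivAt_id y).mul (hasDerivAt_cosh y)).sub (hasDerivAt_sinh y)
      |>.congr_deriv (by simp only [id_eq]; ring)
  have hmono : MonotoneOn (fun y ↦ y * cosh y - sinh y) (Set.Ici 0) := by
    refine monotoneOn_of_deriv_nonneg (convex_Ici 0) (by fun_prop)
      (fun y _ ↦ (hderiv y).differentiableAt.differentiableWithinAt) fun y hy ↦ ?_
    rw [interior_Ici] at hy
    rw [(hderiv y).deriv]
    exact mul_nonneg hy.out.le (sinh_nonneg_iff.2 hy.out.le)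
  have := hmono Set.self_mem_Ici hx hx
  simp only [zero_mul, sinh_zero, sub_zero, sub_nonneg] at this
  rwa [tanh_eq_sinh_div_cosh, div_le_iff₀ (cosh_pos x)]

lemma tanh_sub_tanh (x y : ℝ) : tanh x - tanh y = sinh (x - y) / (cosh x * cosh y) := by
  rw [tanh_eq_sinh_div_cosh, tanh_eq_sinh_div_cosh, div_sub_div _ _ (cosh_pos x).ne'
    (cosh_pos y).ne', sinh_sub]

lemma cosh_sq_le_cosh_add_mul_cosh_sub (a m : ℝ) :
    cosh m ^ 2 ≤ cosh (a + m) * cosh (a - m) := by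
  have h₁ := cosh_sq_sub_sinh_sq a
  have h₂ := cosh_sq_sub_sinh_sq m
  rw [cosh_add, cosh_sub]
  nlinarith [sq_nonneg (sinh a)]

lemma abs_tanh_add_sub_tanh_sub_le (a m : ℝ) :
    |tanh (a + m) - tanh (a - m)| ≤ 2 * tanh |m| := by
  have hpos : 0 < cosh (a + m) * cosh (a - m) := mul_pos (cosh_pos _) (cosh_pos _)
  have hsinh : 0 ≤ sinh (2 * |m|) := sinh_nonneg_iff.2 (by positivity)
  rw [tanh_sub_tanh, abs_div, abs_of_pos hpos, show a + m - (a - m) = 2 * m by ring, abs_sinh,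
    abs_mul, abs_two]
  calc sinh (2 * |m|) / (cosh (a + m) * cosh (a - m))
      ≤ sinh (2 * |m|) / cosh |m| ^ 2 := by
        gcongr
        rw [cosh_abs]
        exact cosh_sq_le_cosh_add_mul_cosh_sub a m
    _ = 2 * tanh |m| := by
        rw [sinh_two_mul, tanh_eq_sinh_div_cosh]
        field_simp

lemma exp_div_exp_add_exp (p q : ℝ) : exp p / (exp p + exp q) = (1 + tanh ((p - q) / 2)) / 2 := by
  have hp : exp p = exp ((p - q) / 2) * exp ((p + q) / 2) := by rw [← exp_add]; ring_nf
  have hq : exp q = exp (-((p - q) / 2)) * exp ((p + q) / 2) := by rw [← exp_add]; ring_nf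
  rw [hp, hq, tanh_eq]
  field_simp
  ring

end Hyperbolic

section Configurations

lemma spin_comp_update_true {ι : Type*} [DecidableEq ι] (σ : ι → Bool) (i : ι) :
    spin ∘ update σ i true = spin ∘ update σ i false + Pi.single i 2 := by
  ext j
  by_cases h : j = i
  · subst h; norm_num [spin]
  · simp [h]

lemma eq_update_update_iff {ι α : Type*} [DecidableEq ι] {v u : ι} (hvu : v ≠ u) (x σ : ι → α)
    (s t : α) :
    σ = update (update x u t) v s ↔ σ v = s ∧ σ u = t ∧ ∀ w, w ≠ v → w ≠ u → σ w = x w := by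
  constructor
  · rintro rfl
    simp +contextual [hvu.symm]
  · rintro ⟨hv, hu, hw⟩
    ext w
    by_cases hwv : w = v
    · simp [hwv, hv]
    by_cases hwu : w = u
    · simp [hwu, hu, hvu.symm]
    · simp [hwv, hwu, hw]

end Configurations

section Energy

variable {ι : Type*} [Fintype ι] [DecidableEq ι] (M : Matrix ι ι ℝ) (θ : ι → ℝ)

def isingEnergy (a : ι → ℝ) : ℝ := θ ⬝ᵥ a + 1 / 2 * (a ⬝ᵥ M *ᵥ a)

lemma mulVec_single_apply (i j : ι) (c : ℝ) : (M *ᵥ Pi.single j c) i = M i j * c :=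
  dotProduct_single _ _ _

variable {M} in
lemma isingEnergy_add_single (hsymm : M.IsSymm) (hdiag : ∀ i, M i i = 0) (a : ι → ℝ) (v : ι)
    (c : ℝ) :
    isingEnergy M θ (a + Pi.single v c) = isingEnergy M θ a + c * (θ v + (M *ᵥ a) v) := by
  have hsymm' : a ⬝ᵥ M *ᵥ Pi.single v c = (M *ᵥ a) v * c := by
    rw [dotProduct_mulVec, ← mulVec_transpose, hsymm.eq, dotProduct_single]
  have hdiag' : Pi.single v c ⬝ᵥ M *ᵥ Pi.single v c = 0 := by
    rw [single_dotProduct, mulVec_single_apply, hdiag, zero_mul, mul_zero]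
  simp only [isingEnergy, mulVec_add, dotProduct_add, add_dotProduct, hsymm', hdiag',
    single_dotProduct, dotProduct_single]
  ring

lemma mulVec_spin_comp_update_true (σ : ι → Bool) (i j : ι) :
    (M *ᵥ (spin ∘ update σ i true)) j = (M *ᵥ (spin ∘ update σ i false)) j + M j i * 2 := by
  rw [spin_comp_update_true, mulVec_add, Pi.add_apply, mulVec_single_apply]

end Energy

section Ising

variable {n : ℕ} (M : Matrix (Fin n) (Fin n) ℝ) (θ : Fin n → ℝ)

lemma isingWt_eq_exp_isingEnergy (σ : Fin n → Bool) :
    isingWt M θ σ = exp (isingEnergy M θ (spin ∘ σ)) := by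
  simp only [isingWt, isingEnergy, dotProduct, mulVec, mul_sum, Function.comp_apply, mul_assoc]

variable {M} in
lemma isingWt_update_true_div (hsymm : M.IsSymm) (hdiag : ∀ i, M i i = 0)
    (σ : Fin n → Bool) (v : Fin n) :
    isingWt M θ (update σ v true) /
        (isingWt M θ (update σ v true) + isingWt M θ (update σ v false))
      = (1 + tanh (θ v + (M *ᵥ (spin ∘ update σ v false)) v)) / 2 := by
  rw [isingWt_eq_exp_isingEnergy, isingWt_eq_exp_isingEnergy, exp_div_exp_add_exp,
    spin_comp_update_true, isingEnergy_add_single θ hsymm hdiag]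
  ring_nf

lemma isingCond_eq_sum_div (A B : (Fin n → Bool) → Prop) [DecidablePred A] [DecidablePred B] :
    isingCond M θ A B = (∑ σ ∈ univ.filter (fun σ ↦ A σ ∧ B σ), isingWt M θ σ) /
      ∑ σ ∈ univ.filter B, isingWt M θ σ := by
  have hZ : (∑ τ, isingWt M θ τ) ≠ 0 :=
    (Finset.sum_pos (fun τ _ ↦ exp_pos _) univ_nonempty).ne'
  simp only [isingCond, isingPr, isingProb, ← Finset.sum_div]
  convert div_div_div_cancel_right₀ hZ _ _

lemma isingCond_eq_isingWt_div {v u : Fin n} (hvu : v ≠ u) (x : Fin n → Bool) (t : Bool) :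
    isingCond M θ (fun σ ↦ σ v = true) (fun σ ↦ σ u = t ∧ ∀ w, w ≠ v → w ≠ u → σ w = x w)
      = isingWt M θ (update (update x u t) v true) /
        (isingWt M θ (update (update x u t) v true) +
          isingWt M θ (update (update x u t) v false)) := by
  have hA : univ.filter (fun σ : Fin n → Bool ↦
      σ v = true ∧ σ u = t ∧ ∀ w, w ≠ v → w ≠ u → σ w = x w) = {update (update x u t) v true} := by
    ext σ
    simp [eq_update_update_iff hvu]
  have hB : univ.filter (fun σ : Fin n → Bool ↦ σ u = t ∧ ∀ w, w ≠ v → w ≠ u → σ w = x w)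
      = {update (update x u t) v true, update (update x u t) v false} := by
    ext σ
    cases hσ : σ v <;> simp [eq_update_update_iff hvu, hσ]
  have hne : update (update x u t) v true ≠ update (update x u t) v false :=
    fun h ↦ by simpa using congrFun h v
  rw [isingCond_eq_sum_div, hA, hB, sum_singleton, sum_pair hne]

end Ising

/-- For an Ising model `I_{(M,θ)}` with symmetric zero-diagonal `M`, for any
distinct vertices `v ≠ u` and any boundary configuration `x`, the influence of `u` on `v` is at
most `tanh |M v u|`, which in turn is at most `|M v u|`. -/
theorem stmt0 {n : ℕ} (M : Matrix (Fin n) (Fin n) ℝ) (θ : Fin n → ℝ)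
    (hsymm : M.IsSymm) (hdiag : ∀ i, M i i = 0)
    (v u : Fin n) (hvu : v ≠ u) (x : Fin n → Bool) :
    |isingCond M θ (fun σ => σ v = true)
        (fun σ => σ u = true ∧ ∀ w, w ≠ v → w ≠ u → σ w = x w) -
      isingCond M θ (fun σ => σ v = true)
        (fun σ => σ u = false ∧ ∀ w, w ≠ v → w ≠ u → σ w = x w)| ≤ Real.tanh |M v u| ∧
    Real.tanh |M v u| ≤ |M v u| := by
  refine ⟨?_, tanh_le_self (abs_nonneg _)⟩
  have hfield : (M *ᵥ (spin ∘ update (update x u true) v false)) v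
      = (M *ᵥ (spin ∘ update (update x u false) v false)) v + M v u * 2 := by
    rw [update_comm hvu.symm, update_comm hvu.symm, mulVec_spin_comp_update_true]
  rw [isingCond_eq_isingWt_div M θ hvu, isingCond_eq_isingWt_div M θ hvu,
    isingWt_update_true_div θ hsymm hdiag, isingWt_update_true_div θ hsymm hdiag, hfield,
    ← add_assoc]
  set h := θ v + (M *ᵥ (spin ∘ update (update x u false) v false)) v
  calc |(1 + tanh (h + M v u * 2)) / 2 - (1 + tanh h) / 2|
      = |tanh ((h + M v u) + M v u) - tanh ((h + M v u) - M v u)| / 2 := by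
        rw [← abs_two, ← abs_div]
        ring_nf
    _ ≤ tanh |M v u| := by linarith [abs_tanh_add_sub_tanh_sub_le (h + M v u) (M v u)]
end
end

section
/- Let b > 0 and d, n positive integers with bd < 1. Let θ ∈ ℝⁿ and M an n×n symmetric matrix with M_{i,i} = 0 for all i, |M_{i,j}| ≤ b for all i, j, and each row of M having at most d nonzero entries. Let S ⊆ [n], x ∈ {−1,1}ⁿ, and v, u ∉ S. Let N be the n×n matrix with N_{i,j} = |M_{i,j}| if i, j ∉ S and N_{i,j} = 0 otherwise. Then for X ∼ I_{(M,θ)}, |P[X_v = 1 | X_S = x_S, X_u = 1] − P[X_v = 1 | X_S = x_S, X_u = −1]| ≤ Σ_{k=0}^∞ (N^k)_{v,u}, where N⁰ is the identity matrix (the series converges since all row sums of N are at most bd < 1). -/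
open Finset Real
open scoped Classical

noncomputable section

/-!
Let `h_T(u, v)` be the total `|M|`-weight of the walks from `v` to `u` that avoid `T` and reach `u`
only at their end; it is at most `∑ₖ (N ^ k) v u`. By downward induction on the pinned set `T`, the
influence of `u` on `v` is at most `h_T(u, v)`. If `u` and `v` are the only free sites, the
conditional law of `X_v` is `sigmoid (2 φ_v)` for the local field `φ_v = θ_v + ∑ⱼ M_{vj} x_j`, which
moves by `2 M_{vu}` with `x_u`; as the sigmoid is `1/4`-Lipschitz the influence is at most
`|M v u|`. Otherwise pin a third free site `w`: by the law of total probability the influence splits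
into the influence with `w` pinned plus the product of the influences `u → w` and (with `u` pinned)
`w → v`, mirroring the first-visit decomposition
`h_T(u, v) = h_{T+w}(u, v) + h_{T+u}(w, v) h_T(u, w)`. The factor `u → w` lives at the same level
`T`, so the largest excess `|influence| - h_T` over all `v` and boundary conditions is at most
`b d < 1` times itself, hence nonpositive.
-/

open Function

lemma nonpos_of_forall_exists_le_mul {α : Type*} {s : Finset α} {f : α → ℝ} {r : ℝ} (hr : r < 1)
    (h : ∀ a ∈ s, ∃ b ∈ s, ∃ c, 0 ≤ c ∧ c ≤ r ∧ f a ≤ c * f b) {a : α} (ha : a ∈ s) :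
    f a ≤ 0 := by
  obtain ⟨a₀, ha₀, hmax⟩ := s.exists_max_image f ⟨a, ha⟩
  refine (hmax a ha).trans (not_lt.1 fun hpos => ?_)
  obtain ⟨b, hb, c, hc₀, hcr, hab⟩ := h a₀ ha₀
  have : c * f b ≤ r * f a₀ :=
    (mul_le_mul_of_nonneg_left (hmax b hb) hc₀).trans (mul_le_mul_of_nonneg_right hcr hpos.le)
  nlinarith

namespace Matrix

section NonnegPow

variable {ι : Type*} [Fintype ι] [DecidableEq ι] {A B : Matrix ι ι ℝ} {r : ℝ}

lemma pow_apply_le_pow_apply (hA : ∀ i j, 0 ≤ A i j) (hAB : ∀ i j, A i j ≤ B i j) (k : ℕ)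
    (i j : ι) : (A ^ k) i j ≤ (B ^ k) i j := by
  induction k generalizing i with
  | zero => rfl
  | succ k ih =>
    rw [pow_succ', pow_succ', mul_apply, mul_apply]
    exact sum_le_sum fun l _ => mul_le_mul (hAB i l) (ih l) (pow_apply_nonneg hA k l j)
      ((hA i l).trans (hAB i l))

lemma sum_pow_apply_le (hA : ∀ i j, 0 ≤ A i j) (hrow : ∀ i, ∑ j, A i j ≤ r) (k : ℕ) (i : ι) :
    ∑ j, (A ^ k) i j ≤ r ^ k := by
  have hr : 0 ≤ r := (sum_nonneg fun j _ => hA i j).trans (hrow i)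
  induction k generalizing i with
  | zero => simp [one_apply]
  | succ k ih =>
    calc ∑ j, (A ^ (k + 1)) i j = ∑ l, A i l * ∑ j, (A ^ k) l j := by
          simp only [pow_succ', mul_apply, mul_sum]
          exact sum_comm
      _ ≤ ∑ l, A i l * r ^ k := sum_le_sum fun l _ => mul_le_mul_of_nonneg_left (ih l) (hA i l)
      _ ≤ r ^ (k + 1) := by
          rw [← sum_mul, pow_succ']
          exact mul_le_mul_of_nonneg_right (hrow i) (pow_nonneg hr k)

lemma summable_pow_apply (hA : ∀ i j, 0 ≤ A i j) (hrow : ∀ i, ∑ j, A i j ≤ r) (hr : r < 1)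
    (i j : ι) : Summable fun k => (A ^ k) i j :=
  (summable_geometric_of_lt_one ((sum_nonneg fun j _ => hA i j).trans (hrow i)) hr).of_nonneg_of_le
    (fun k => pow_apply_nonneg hA k i j)
    fun k => (single_le_sum (fun l _ => pow_apply_nonneg hA k i l) (mem_univ j)).trans
      (sum_pow_apply_le hA hrow k i)

/-- A discrete maximum principle. -/
lemma abs_le_of_eq_sum_mul (hA : ∀ i j, 0 ≤ A i j) (hrow : ∀ i, ∑ j, A i j ≤ r) (hr : r < 1)
    {s : Finset ι} {e : ι → ℝ} {c : ℝ} (hc : 0 ≤ c) (hs : ∀ x ∈ s, |e x| ≤ c)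
    (he : ∀ x ∉ s, e x = ∑ j, A x j * e j) (x : ι) : |e x| ≤ c := by
  obtain ⟨x₀, -, hx₀⟩ := univ.exists_max_image (fun x => |e x|) ⟨x, mem_univ x⟩
  refine (hx₀ x (mem_univ x)).trans ?_
  by_cases hx₀s : x₀ ∈ s
  · exact hs x₀ hx₀s
  have : |e x₀| ≤ r * |e x₀| :=
    calc |e x₀| ≤ ∑ j, A x₀ j * |e j| := by
          rw [he x₀ hx₀s]
          refine (abs_sum_le_sum_abs _ _).trans_eq (sum_congr rfl fun j _ => ?_)
          rw [abs_mul, abs_of_nonneg (hA x₀ j)]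
      _ ≤ ∑ j, A x₀ j * |e x₀| :=
          sum_le_sum fun j _ => mul_le_mul_of_nonneg_left (hx₀ j (mem_univ j)) (hA x₀ j)
      _ ≤ r * |e x₀| := by
          rw [← sum_mul]
          exact mul_le_mul_of_nonneg_right (hrow x₀) (abs_nonneg _)
  nlinarith [abs_nonneg (e x₀)]

end NonnegPow

variable {ι : Type*} [DecidableEq ι] {A B : Matrix ι ι ℝ} {r : ℝ} {R : Finset ι} {t : ι}

def firstPassageStep (A : Matrix ι ι ℝ) (R : Finset ι) (t : ι) : Matrix ι ι ℝ :=
  of fun i j => if i ∈ insert t R ∨ j ∈ R then 0 else A i j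

lemma firstPassageStep_nonneg (hA : ∀ i j, 0 ≤ A i j) (i j : ι) :
    0 ≤ firstPassageStep A R t i j := by
  simp only [firstPassageStep, of_apply]; split_ifs <;> simp [hA i j]

lemma firstPassageStep_le (hA : ∀ i j, 0 ≤ A i j) (i j : ι) :
    firstPassageStep A R t i j ≤ A i j := by
  simp only [firstPassageStep, of_apply]; split_ifs <;> simp [hA i j]

variable [Fintype ι]

/-- The total `A`-weight of the walks from `x` to `t` that avoid `R` and visit `t` only at their
end. -/
def firstPassageWeight (A : Matrix ι ι ℝ) (R : Finset ι) (t x : ι) : ℝ :=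
  ∑' k, (firstPassageStep A R t ^ k) x t

lemma sum_firstPassageStep_le (hA : ∀ i j, 0 ≤ A i j) (hrow : ∀ i, ∑ j, A i j ≤ r) (i : ι) :
    ∑ j, firstPassageStep A R t i j ≤ r :=
  (sum_le_sum fun j _ => firstPassageStep_le hA i j).trans (hrow i)

lemma firstPassageStep_pow_succ_apply {x : ι} (hx : x ∈ insert t R) (k : ℕ) (j : ι) :
    (firstPassageStep A R t ^ (k + 1)) x j = 0 := by
  rw [pow_succ', mul_apply]
  exact sum_eq_zero fun l _ => by rw [firstPassageStep, of_apply, if_pos (Or.inl hx), zero_mul]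

lemma firstPassageWeight_self : firstPassageWeight A R t t = 1 := by
  have h (k : ℕ) : (firstPassageStep A R t ^ k) t t = if k = 0 then 1 else 0 := by
    cases k with
    | zero => simp
    | succ k => simp [firstPassageStep_pow_succ_apply (mem_insert_self t R)]
  simp only [firstPassageWeight, h, tsum_ite_eq]

lemma firstPassageWeight_of_mem {x : ι} (hx : x ∈ R) (hxt : x ≠ t) :
    firstPassageWeight A R t x = 0 := by
  have h (k : ℕ) : (firstPassageStep A R t ^ k) x t = 0 := by
    cases k with
    | zero => simp [hxt]
    | succ k => exact firstPassageStep_pow_succ_apply (mem_insert_of_mem hx) k t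
  simp only [firstPassageWeight, h, tsum_zero]

lemma firstPassageWeight_nonneg (hA : ∀ i j, 0 ≤ A i j) (x : ι) :
    0 ≤ firstPassageWeight A R t x :=
  tsum_nonneg fun k => pow_apply_nonneg (firstPassageStep_nonneg hA) k x t

lemma firstPassageWeight_le_tsum_pow (hA : ∀ i j, 0 ≤ A i j)
    (hB : ∀ i j, firstPassageStep A R t i j ≤ B i j) (hrow : ∀ i, ∑ j, B i j ≤ r) (hr : r < 1)
    (x : ι) : firstPassageWeight A R t x ≤ ∑' k, (B ^ k) x t := by
  have hB0 (i j : ι) : 0 ≤ B i j := (firstPassageStep_nonneg hA i j).trans (hB i j)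
  have hstep (k : ℕ) := pow_apply_le_pow_apply (firstPassageStep_nonneg hA) hB k x t
  exact Summable.tsum_le_tsum hstep
    ((summable_pow_apply hB0 hrow hr x t).of_nonneg_of_le
      (fun k => pow_apply_nonneg (firstPassageStep_nonneg hA) k x t) hstep)
    (summable_pow_apply hB0 hrow hr x t)

lemma firstPassageWeight_eq_sum (hA : ∀ i j, 0 ≤ A i j) (hrow : ∀ i, ∑ j, A i j ≤ r)
    (hr : r < 1) (ht : t ∉ R) {x : ι} (hxR : x ∉ R) (hxt : x ≠ t) :
    firstPassageWeight A R t x = ∑ j, A x j * firstPassageWeight A R t j := by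
  set P := firstPassageStep A R t
  have hsum (j : ι) : Summable fun k => (P ^ k) j t :=
    summable_pow_apply (firstPassageStep_nonneg hA) (sum_firstPassageStep_le hA hrow) hr j t
  have hPA (j : ι) : P x j * firstPassageWeight A R t j = A x j * firstPassageWeight A R t j := by
    by_cases hj : j ∈ R
    · rw [firstPassageWeight_of_mem hj (ne_of_mem_of_not_mem hj ht), mul_zero, mul_zero]
    · simp [P, firstPassageStep, hxR, hxt, hj]
  calc firstPassageWeight A R t x = ∑' k, (P ^ (k + 1)) x t := by
        rw [firstPassageWeight, (hsum x).tsum_eq_zero_add]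
        simp [hxt]
    _ = ∑ j, P x j * firstPassageWeight A R t j := by
        simp only [pow_succ', mul_apply, firstPassageWeight]
        rw [Summable.tsum_finsetSum fun j _ => (hsum j).mul_left _]
        exact sum_congr rfl fun j _ => (hsum j).tsum_mul_left _
    _ = ∑ j, A x j * firstPassageWeight A R t j := sum_congr rfl fun j _ => hPA j

section Harmonic

variable (hA : ∀ i j, 0 ≤ A i j) (hrow : ∀ i, ∑ j, A i j ≤ r) (hr : r < 1)
include hA hrow hr

lemma firstPassageWeight_le_one (ht : t ∉ R) (x : ι) : firstPassageWeight A R t x ≤ 1 := by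
  have hboundary : ∀ y ∈ insert t R, |firstPassageWeight A R t y| ≤ 1 := by
    intro y hy
    rcases eq_or_ne y t with rfl | hyt
    · simp [firstPassageWeight_self]
    · simp [firstPassageWeight_of_mem ((mem_insert.1 hy).resolve_left hyt) hyt]
  have hharmonic : ∀ y ∉ insert t R,
      firstPassageWeight A R t y = ∑ j, A y j * firstPassageWeight A R t j := by
    intro y hy
    rw [mem_insert, not_or] at hy
    exact firstPassageWeight_eq_sum hA hrow hr ht hy.2 hy.1
  exact (le_abs_self _).trans (abs_le_of_eq_sum_mul hA hrow hr zero_le_one hboundary hharmonic x)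

lemma firstPassageWeight_le (ht : t ∉ R) {x : ι} (hxR : x ∉ R) (hxt : x ≠ t) :
    firstPassageWeight A R t x ≤ r := by
  rw [firstPassageWeight_eq_sum hA hrow hr ht hxR hxt]
  refine (sum_le_sum fun j _ => ?_).trans (hrow x)
  exact mul_le_of_le_one_right (hA x j) (firstPassageWeight_le_one hA hrow hr ht j)

lemma le_firstPassageWeight (ht : t ∉ R) {x : ι} (hxR : x ∉ R) (hxt : x ≠ t) :
    A x t ≤ firstPassageWeight A R t x := by
  rw [firstPassageWeight_eq_sum hA hrow hr ht hxR hxt]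
  calc A x t = A x t * firstPassageWeight A R t t := by rw [firstPassageWeight_self, mul_one]
    _ ≤ ∑ j, A x j * firstPassageWeight A R t j :=
        single_le_sum (fun j _ => mul_nonneg (hA x j) (firstPassageWeight_nonneg hA j))
          (mem_univ t)

/-- Splitting the walks from `x` to `u` at their first visit to `w`; the proof compares the two
sides, which are harmonic off `insert u (insert w R)`, by the maximum principle. -/
lemma firstPassageWeight_eq_add_mul {u w : ι} (hu : u ∉ R) (hw : w ∉ R) (huw : u ≠ w) (x : ι) :
    firstPassageWeight A R u x = firstPassageWeight A (insert w R) u x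
      + firstPassageWeight A (insert u R) w x * firstPassageWeight A R u w := by
  set F := firstPassageWeight A R u
  set G := firstPassageWeight A (insert w R) u
  set H := firstPassageWeight A (insert u R) w
  have hwu : w ≠ u := huw.symm
  have hboundary : ∀ y ∈ insert u (insert w R), |F y - G y - H y * F w| ≤ 0 := by
    intro y hy
    rcases mem_insert.1 hy with rfl | hy
    · simp [F, G, H, firstPassageWeight_self, firstPassageWeight_of_mem (mem_insert_self y R) huw]
    rcases mem_insert.1 hy with rfl | hyR
    · simp [G, H, firstPassageWeight_self, firstPassageWeight_of_mem (mem_insert_self y R) hwu]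
    have hyu : y ≠ u := ne_of_mem_of_not_mem hyR hu
    have hyw : y ≠ w := ne_of_mem_of_not_mem hyR hw
    simp [F, G, H, firstPassageWeight_of_mem hyR hyu,
      firstPassageWeight_of_mem (mem_insert_of_mem hyR) hyu,
      firstPassageWeight_of_mem (mem_insert_of_mem hyR) hyw]
  have hharmonic : ∀ y ∉ insert u (insert w R),
      F y - G y - H y * F w = ∑ j, A y j * (F j - G j - H j * F w) := by
    intro y hy
    simp only [mem_insert, not_or] at hy
    obtain ⟨hyu, hyw, hyR⟩ := hy
    have hF : F y = ∑ j, A y j * F j := firstPassageWeight_eq_sum hA hrow hr hu hyR hyu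
    have hG : G y = ∑ j, A y j * G j :=
      firstPassageWeight_eq_sum hA hrow hr (by simp [huw, hu]) (by simp [hyw, hyR]) hyu
    have hH : H y = ∑ j, A y j * H j :=
      firstPassageWeight_eq_sum hA hrow hr (by simp [hwu, hw]) (by simp [hyu, hyR]) hyw
    rw [hF, hG, hH, sum_mul, ← sum_sub_distrib, ← sum_sub_distrib]
    exact sum_congr rfl fun j _ => by ring
  have := abs_le_of_eq_sum_mul hA hrow hr le_rfl hboundary hharmonic x
  linarith [abs_nonpos_iff.1 this]

end Harmonic

end Matrix

lemma abs_sigmoid_sub_le (a b : ℝ) : |sigmoid a - sigmoid b| ≤ |a - b| / 4 := by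
  have hderiv (x : ℝ) : ‖deriv sigmoid x‖ ≤ 1 / 4 := by
    rw [deriv_sigmoid, Real.norm_eq_abs, abs_of_nonneg (mul_nonneg (sigmoid_nonneg x)
      (sub_nonneg.2 (sigmoid_le_one x)))]
    nlinarith [sq_nonneg (2 * sigmoid x - 1)]
  have := Convex.norm_image_sub_le_of_norm_deriv_le (fun x _ => differentiableAt_sigmoid)
    (fun x _ => hderiv x) convex_univ (Set.mem_univ b) (Set.mem_univ a)
  rw [Real.norm_eq_abs, Real.norm_eq_abs] at this
  linarith

lemma exp_div_exp_add_one (x : ℝ) : exp x / (exp x + 1) = sigmoid x := by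
  rw [sigmoid_def, exp_neg]
  field_simp

section Ising

variable {n : ℕ} (M : Matrix (Fin n) (Fin n) ℝ) (θ : Fin n → ℝ)

lemma isingProb_pos (σ : Fin n → Bool) : 0 < isingProb M θ σ :=
  div_pos (exp_pos _) (sum_pos (fun _ _ => exp_pos _) univ_nonempty)

lemma isingPr_nonneg (A : (Fin n → Bool) → Prop) : 0 ≤ isingPr M θ A :=
  sum_nonneg fun σ _ => (isingProb_pos M θ σ).le

lemma isingPr_pos {A : (Fin n → Bool) → Prop} (h : ∃ σ, A σ) : 0 < isingPr M θ A := by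
  obtain ⟨σ, hσ⟩ := h
  exact sum_pos (fun τ _ => isingProb_pos M θ τ) ⟨σ, by simpa using hσ⟩

lemma isingPr_mono {A B : (Fin n → Bool) → Prop} (h : ∀ σ, A σ → B σ) :
    isingPr M θ A ≤ isingPr M θ B :=
  sum_le_sum_of_subset_of_nonneg (fun σ => by simpa using h σ)
    fun σ _ _ => (isingProb_pos M θ σ).le

lemma isingPr_congr {A B : (Fin n → Bool) → Prop} (h : ∀ σ, A σ ↔ B σ) :
    isingPr M θ A = isingPr M θ B := by
  rw [funext fun σ => propext (h σ)]

lemma isingPr_eq_isingProb {A : (Fin n → Bool) → Prop} {τ : Fin n → Bool}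
    (h : ∀ σ, A σ ↔ σ = τ) : isingPr M θ A = isingProb M θ τ := by
  have hA : univ.filter (fun σ => A σ) = {τ} := by ext σ; simp [h]
  rw [isingPr, hA, sum_singleton]

lemma isingPr_eq_add (A : (Fin n → Bool) → Prop) (w : Fin n) :
    isingPr M θ A = isingPr M θ (fun σ => A σ ∧ σ w = true)
      + isingPr M θ (fun σ => A σ ∧ σ w = false) := by
  simp only [isingPr, ← filter_filter, Bool.eq_false_iff]
  exact (sum_filter_add_sum_filter_not _ _ _).symm

lemma isingCond_congr {A A' B B' : (Fin n → Bool) → Prop} (hA : ∀ σ, A σ ↔ A' σ)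
    (hB : ∀ σ, B σ ↔ B' σ) : isingCond M θ A B = isingCond M θ A' B' := by
  rw [funext fun σ => propext (hA σ), funext fun σ => propext (hB σ)]

lemma isingCond_nonneg (A B : (Fin n → Bool) → Prop) : 0 ≤ isingCond M θ A B :=
  div_nonneg (isingPr_nonneg M θ _) (isingPr_nonneg M θ _)

lemma isingCond_le_one (A B : (Fin n → Bool) → Prop) : isingCond M θ A B ≤ 1 :=
  div_le_one_of_le₀ (isingPr_mono M θ fun _ h => h.2) (isingPr_nonneg M θ _)

/-- The law of total probability. -/
lemma isingCond_eq_add (A B : (Fin n → Bool) → Prop) (w : Fin n)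
    (hB : ∀ s, ∃ σ, B σ ∧ σ w = s) :
    isingCond M θ A B = isingCond M θ (fun σ => σ w = true) B
        * isingCond M θ A (fun σ => B σ ∧ σ w = true)
      + (1 - isingCond M θ (fun σ => σ w = true) B)
        * isingCond M θ A (fun σ => B σ ∧ σ w = false) := by
  have hA : isingPr M θ (fun σ => A σ ∧ B σ) = isingPr M θ (fun σ => A σ ∧ B σ ∧ σ w = true)
      + isingPr M θ (fun σ => A σ ∧ B σ ∧ σ w = false) := by
    rw [isingPr_eq_add M θ _ w]; simp only [and_assoc]
  have hW : isingPr M θ (fun σ => σ w = true ∧ B σ) = isingPr M θ (fun σ => B σ ∧ σ w = true) :=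
    isingPr_congr M θ fun σ => and_comm
  have h₁ := isingPr_pos M θ (hB true)
  have h₀ := isingPr_pos M θ (hB false)
  simp only [isingCond, hA, hW, isingPr_eq_add M θ B w]
  field_simp
  ring

end Ising

section Influence

variable {n : ℕ} (M : Matrix (Fin n) (Fin n) ℝ) (θ : Fin n → ℝ)

def pinned (T : Finset (Fin n)) (y σ : Fin n → Bool) : Prop := ∀ i ∈ T, σ i = y i

/-- `P[X_v = 1 | X_T = y_T, X_u = ε]`. -/
def spinProb (T : Finset (Fin n)) (y : Fin n → Bool) (u : Fin n) (ε : Bool) (v : Fin n) : ℝ :=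
  isingCond M θ (fun σ => σ v = true) (fun σ => pinned T y σ ∧ σ u = ε)

def influence (T : Finset (Fin n)) (y : Fin n → Bool) (u v : Fin n) : ℝ :=
  spinProb M θ T y u true v - spinProb M θ T y u false v

variable {M θ} {T : Finset (Fin n)} {y : Fin n → Bool} {u v w : Fin n}

lemma pinned_insert_iff (hw : w ∉ T) (s : Bool) (σ : Fin n → Bool) :
    pinned (insert w T) (update y w s) σ ↔ pinned T y σ ∧ σ w = s := by
  simp only [pinned, forall_mem_insert, update_self]
  refine and_comm.trans (and_congr_left' (forall₂_congr fun _ hi => ?_))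
  rw [update_of_ne (ne_of_mem_of_not_mem hi hw)]

lemma exists_pinned (hu : u ∉ T) (ε : Bool) : ∃ σ, pinned T y σ ∧ σ u = ε :=
  ⟨update y u ε, fun _ hi => update_of_ne (ne_of_mem_of_not_mem hi hu) ε y,
    update_self u ε y⟩

lemma influence_self (hu : u ∉ T) : influence M θ T y u u = 1 := by
  have hpos := isingPr_pos M θ (exists_pinned (y := y) hu true)
  have h₁ : spinProb M θ T y u true u = 1 := by
    rw [spinProb, isingCond, isingPr_congr M θ fun σ => and_iff_right_of_imp And.right]
    exact div_self hpos.ne'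
  have h₀ : spinProb M θ T y u false u = 0 := by
    rw [spinProb, isingCond, isingPr_congr M θ (B := fun _ => False) fun σ => by simp_all,
      isingPr]
    simp
  rw [influence, h₁, h₀, sub_zero]

lemma spinProb_eq_add (hu : u ∉ T) (hw : w ∉ T) (huw : u ≠ w) (ε : Bool) (v : Fin n) :
    spinProb M θ T y u ε v = spinProb M θ T y u ε w
        * spinProb M θ (insert w T) (update y w true) u ε v
      + (1 - spinProb M θ T y u ε w)
        * spinProb M θ (insert w T) (update y w false) u ε v := by
  have hpin (s : Bool) (σ : Fin n → Bool) :
      (pinned T y σ ∧ σ u = ε) ∧ σ w = s ↔ pinned (insert w T) (update y w s) σ ∧ σ u = ε := by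
    rw [pinned_insert_iff hw]; tauto
  have hB (s : Bool) : ∃ σ, (pinned T y σ ∧ σ u = ε) ∧ σ w = s := by
    obtain ⟨σ, hσ⟩ := exists_pinned (T := insert w T) (y := update y w s) (u := u)
      (by simp [huw, hu]) ε
    exact ⟨σ, (hpin s σ).2 hσ⟩
  rw [spinProb, isingCond_eq_add M θ _ _ w hB, spinProb, spinProb, spinProb,
    isingCond_congr M θ (fun _ => Iff.rfl) (hpin true),
    isingCond_congr M θ (fun _ => Iff.rfl) (hpin false)]

lemma spinProb_insert_comm (hu : u ∉ T) (hw : w ∉ T) (ε s : Bool) (v : Fin n) :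
    spinProb M θ (insert w T) (update y w s) u ε v
      = spinProb M θ (insert u T) (update y u ε) w s v :=
  isingCond_congr M θ (fun _ => Iff.rfl) fun σ => by
    rw [pinned_insert_iff hw, pinned_insert_iff hu]; tauto

/-- Pinning a third site `w` splits the influence of `u` on `v` into the influence with `w` pinned
and the influence transmitted through `w`. -/
lemma abs_influence_le (hu : u ∉ T) (hw : w ∉ T) (huw : u ≠ w) {c : ℝ}
    (hc : ∀ s, |influence M θ (insert w T) (update y w s) u v| ≤ c) :
    |influence M θ T y u v| ≤
      c + |influence M θ T y u w| * |influence M θ (insert u T) (update y u false) w v| := by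
  set q := spinProb M θ T y u true w
  have hq₀ : 0 ≤ q := isingCond_nonneg M θ _ _
  have hq₁ : q ≤ 1 := isingCond_le_one M θ _ _
  have hdecomp : influence M θ T y u v
      = q * influence M θ (insert w T) (update y w true) u v
        + (1 - q) * influence M θ (insert w T) (update y w false) u v
        + influence M θ T y u w * influence M θ (insert u T) (update y u false) w v := by
    simp only [influence, spinProb_eq_add hu hw huw _ v, ← spinProb_insert_comm hu hw false]
    ring
  rw [hdecomp]
  calc _ ≤ |q * influence M θ (insert w T) (update y w true) u v|
        + |(1 - q) * influence M θ (insert w T) (update y w false) u v|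
        + |influence M θ T y u w * influence M θ (insert u T) (update y u false) w v| :=
        abs_add_three _ _ _
    _ ≤ q * c + (1 - q) * c
        + |influence M θ T y u w| * |influence M θ (insert u T) (update y u false) w v| := by
        rw [abs_mul, abs_mul, abs_mul, abs_of_nonneg hq₀, abs_of_nonneg (sub_nonneg.2 hq₁)]
        gcongr
        exacts [hc true, hc false]
    _ = _ := by ring

end Influence

section LocalField

variable {n : ℕ} (M : Matrix (Fin n) (Fin n) ℝ) (θ : Fin n → ℝ)

def localField (σ : Fin n → Bool) (v : Fin n) : ℝ := θ v + ∑ j, M v j * spin (σ j)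

lemma spin_update_true_sub_false (σ : Fin n → Bool) (v i : Fin n) :
    spin (update σ v true i) - spin (update σ v false i)
      = if i = v then 2 else 0 := by
  by_cases h : i = v <;> simp [h, spin]; norm_num

lemma isingWt_update_true (hsymm : M.IsSymm) (hdiag : ∀ i, M i i = 0) (σ : Fin n → Bool)
    (v : Fin n) :
    isingWt M θ (update σ v true)
      = isingWt M θ (update σ v false) * exp (2 * localField M θ σ v) := by
  set p := fun i => spin (update σ v true i)
  set m := fun i => spin (update σ v false i)
  have hpm (i : Fin n) : p i = m i + if i = v then 2 else 0 := by
    rw [← spin_update_true_sub_false σ v i]; ring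
  have hfield (s : Bool) :
      ∑ j, M v j * spin (update σ v s j) = ∑ j, M v j * spin (σ j) :=
    sum_congr rfl fun j _ => by rcases eq_or_ne j v with rfl | h <;> simp [*]
  have hfield' : ∑ j, M v j * m j = ∑ j, M v j * spin (σ j) := hfield false
  have hsym : ∑ i, m i * M i v = ∑ j, M v j * m j :=
    sum_congr rfl fun i _ => by rw [hsymm.apply v i]; ring
  have hquad : ∑ i, ∑ j, p i * M i j * p j
      = ∑ i, ∑ j, m i * M i j * m j + 4 * ∑ j, M v j * spin (σ j) :=
    calc ∑ i, ∑ j, p i * M i j * p j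
        = ∑ i, ∑ j, m i * M i j * m j + 2 * ∑ j, M v j * m j + 2 * ∑ i, m i * M i v := by
          simp only [hpm, add_mul, mul_add, sum_add_distrib, mul_ite, ite_mul, mul_zero, zero_mul,
            sum_ite_irrel, sum_const_zero, sum_ite_eq', mem_univ, if_true, hdiag, mul_sum]
          ring_nf
      _ = _ := by rw [hsym, hfield']; ring
  have hlin : ∑ i, θ i * p i = ∑ i, θ i * m i + 2 * θ v := by
    simp only [hpm, mul_add, sum_add_distrib, mul_ite, mul_zero, sum_ite_eq', mem_univ, if_true]
    ring
  change exp (∑ i, θ i * p i + 1 / 2 * ∑ i, ∑ j, p i * M i j * p j)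
    = exp (∑ i, θ i * m i + 1 / 2 * ∑ i, ∑ j, m i * M i j * m j) * exp (2 * localField M θ σ v)
  rw [← exp_add, hlin, hquad, localField]
  ring_nf

lemma isingCond_eq_sigmoid (hsymm : M.IsSymm) (hdiag : ∀ i, M i i = 0)
    {B : (Fin n → Bool) → Prop} {τ : Fin n → Bool} {v : Fin n}
    (hB : ∀ σ, B σ ↔ ∀ i ≠ v, σ i = τ i) :
    isingCond M θ (fun σ => σ v = true) B = sigmoid (2 * localField M θ τ v) := by
  have hpt (s : Bool) (σ : Fin n → Bool) : B σ ∧ σ v = s ↔ σ = update τ v s := by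
    rw [hB, eq_update_iff]; tauto
  have hprob (s : Bool) : isingPr M θ (fun σ => B σ ∧ σ v = s)
      = isingProb M θ (update τ v s) := isingPr_eq_isingProb M θ (hpt s)
  rw [isingCond, isingPr_congr M θ fun σ => and_comm, isingPr_eq_add M θ B v, hprob, hprob,
    isingProb, isingProb, isingWt_update_true M θ hsymm hdiag, ← exp_div_exp_add_one]
  have hW : 0 < isingWt M θ (update τ v false) := exp_pos _
  have hZ : 0 < ∑ σ, isingWt M θ σ := sum_pos (fun _ _ => exp_pos _) univ_nonempty
  have := exp_pos (2 * localField M θ τ v)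
  field_simp

lemma localField_update_true_sub_false (σ : Fin n → Bool) (u v : Fin n) :
    localField M θ (update σ u true) v - localField M θ (update σ u false) v
      = 2 * M v u := by
  simp only [localField, add_sub_add_left_eq_sub, ← sum_sub_distrib, ← mul_sub,
    spin_update_true_sub_false, mul_ite, mul_zero, sum_ite_eq', mem_univ, if_true]
  ring

lemma abs_influence_le_of_forall_notMem (hsymm : M.IsSymm) (hdiag : ∀ i, M i i = 0)
    {T : Finset (Fin n)} (y : Fin n → Bool)
    {u v : Fin n} (hu : u ∉ T) (hv : v ∉ T) (hvu : v ≠ u) (hfree : ∀ i ∉ T, i ≠ u → i = v) :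
    |influence M θ T y u v| ≤ |M v u| := by
  have hsig (ε : Bool) :
      spinProb M θ T y u ε v = sigmoid (2 * localField M θ (update y u ε) v) := by
    refine isingCond_eq_sigmoid M θ hsymm hdiag fun σ => ⟨fun ⟨hT, hσu⟩ i hiv => ?_, fun h => ?_⟩
    · rcases eq_or_ne i u with rfl | hiu
      · rw [hσu, update_self]
      · have hiT : i ∈ T := by by_contra hiT; exact hiv (hfree i hiT hiu)
        rw [hT i hiT, update_of_ne hiu]
    · refine ⟨fun i hi => ?_, by rw [h u hvu.symm, update_self]⟩
      rw [h i (ne_of_mem_of_not_mem hi hv), update_of_ne (ne_of_mem_of_not_mem hi hu)]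
  calc |influence M θ T y u v|
      ≤ |2 * localField M θ (update y u true) v
          - 2 * localField M θ (update y u false) v| / 4 := by
        rw [influence, hsig, hsig]; exact abs_sigmoid_sub_le _ _
    _ = |M v u| := by
        rw [← mul_sub, localField_update_true_sub_false M θ, ← mul_assoc, abs_mul]; norm_num

end LocalField

open Matrix

section Induction

variable {n : ℕ} {M : Matrix (Fin n) (Fin n) ℝ} (θ : Fin n → ℝ) {r : ℝ}
  (hrow : ∀ i, ∑ j, |M i j| ≤ r) (hr : r < 1)
include hrow hr

lemma abs_influence_sub_le_mul {T : Finset (Fin n)} {y : Fin n → Bool} {u v w : Fin n}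
    (hu : u ∉ T) (hw : w ∉ T) (hwu : w ≠ u)
    (hpin_w : ∀ s, |influence M θ (insert w T) (update y w s) u v|
      ≤ firstPassageWeight (M.map abs) (insert w T) u v)
    (hpin_u : |influence M θ (insert u T) (update y u false) w v|
      ≤ firstPassageWeight (M.map abs) (insert u T) w v) :
    |influence M θ T y u v| - firstPassageWeight (M.map abs) T u v
      ≤ firstPassageWeight (M.map abs) (insert u T) w v
        * (|influence M θ T y u w| - firstPassageWeight (M.map abs) T u w) := by
  have hsplit := abs_influence_le hu hw hwu.symm hpin_w (v := v)
  rw [firstPassageWeight_eq_add_mul (A := M.map abs) (fun _ _ => abs_nonneg _) hrow hr hu hw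
    hwu.symm v]
  nlinarith [abs_nonneg (influence M θ T y u w)]

variable (hsymm : M.IsSymm) (hdiag : ∀ i, M i i = 0)
include hsymm hdiag

theorem abs_influence_le_firstPassageWeight (T : Finset (Fin n)) :
    ∀ (y : Fin n → Bool) (u v : Fin n), u ∉ T → v ∉ T → v ≠ u →
      |influence M θ T y u v| ≤ firstPassageWeight (M.map abs) T u v := by
  refine Finset.strongDownwardInductionOn (n := Fintype.card (Fin n)) T (fun T ih _ => ?_)
    (card_le_univ T)
  intro y u v hu hv hvu
  have hA (i j : Fin n) : 0 ≤ M.map abs i j := abs_nonneg _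
  have hr0 : 0 ≤ r := (sum_nonneg fun j _ => abs_nonneg _).trans (hrow u)
  set s := (univ.filter fun v' => v' ∉ T ∧ v' ≠ u) ×ˢ (univ : Finset (Fin n → Bool))
  set excess : Fin n × (Fin n → Bool) → ℝ := fun p =>
    |influence M θ T p.2 u p.1| - firstPassageWeight (M.map abs) T u p.1
  have hstep : ∀ p ∈ s, ∃ q ∈ s, ∃ c, 0 ≤ c ∧ c ≤ r ∧ excess p ≤ c * excess q := by
    rintro ⟨v', y'⟩ hp
    obtain ⟨hv'T, hv'u⟩ : v' ∉ T ∧ v' ≠ u := by simpa [s] using hp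
    by_cases hw : ∃ w, w ∉ T ∧ w ≠ u ∧ w ≠ v'
    · obtain ⟨w, hwT, hwu, hwv'⟩ := hw
      have hwuT : w ∉ insert u T := by simp [hwu, hwT]
      have hv'uT : v' ∉ insert u T := by simp [hv'u, hv'T]
      refine ⟨(w, y'), by simpa [s] using ⟨hwT, hwu⟩, _, firstPassageWeight_nonneg hA v',
        firstPassageWeight_le hA hrow hr hwuT hv'uT hwv'.symm, ?_⟩
      refine abs_influence_sub_le_mul θ hrow hr hu hwT hwu (fun b => ?_) ?_
      · exact ih (card_le_univ _) (ssubset_insert hwT) _ u v' (by simp [hwu.symm, hu])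
          (by simp [hwv'.symm, hv'T]) hv'u
      · exact ih (card_le_univ _) (ssubset_insert hu) _ w v' hwuT hv'uT hwv'.symm
    · push Not at hw
      refine ⟨(v', y'), hp, 0, le_rfl, hr0, ?_⟩
      rw [zero_mul, sub_nonpos]
      exact (abs_influence_le_of_forall_notMem M θ hsymm hdiag y' hu hv'T hv'u hw).trans
        (le_firstPassageWeight hA hrow hr hu hv'T hv'u)
  have := nonpos_of_forall_exists_le_mul hr hstep (a := (v, y)) (by simpa [s] using ⟨hv, hvu⟩)
  exact sub_nonpos.1 this

end Induction

lemma sum_abs_le_of_card_support_le {ι : Type*} [Fintype ι] {f : ι → ℝ} {b : ℝ} {d : ℕ}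
    (hb : 0 ≤ b) (hf : ∀ j, |f j| ≤ b) (hd : (univ.filter fun j => f j ≠ 0).card ≤ d) :
    ∑ j, |f j| ≤ b * d :=
  calc ∑ j, |f j| = ∑ j ∈ univ.filter fun j => f j ≠ 0, |f j| :=
        (sum_filter_of_ne fun _ _ hj => abs_ne_zero.1 hj).symm
    _ ≤ (univ.filter fun j => f j ≠ 0).card * b := by
        simpa using sum_le_card_nsmul _ _ b fun j _ => hf j
    _ ≤ b * d := by rw [mul_comm]; exact mul_le_mul_of_nonneg_left (by exact_mod_cast hd) hb

theorem stmt1_general {n : ℕ} (b : ℝ) (d : ℕ)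
    (hbd : b * d < 1)
    (M : Matrix (Fin n) (Fin n) ℝ) (θ : Fin n → ℝ)
    (hsymm : M.IsSymm) (hdiag : ∀ i, M i i = 0)
    (hbound : ∀ i j, |M i j| ≤ b)
    (hsparse : ∀ i, (Finset.univ.filter (fun j => M i j ≠ 0)).card ≤ d)
    (S : Finset (Fin n)) (x : Fin n → Bool) (v u : Fin n)
    (hv : v ∉ S) (hu : u ∉ S)
    (N : Matrix (Fin n) (Fin n) ℝ)
    (hN : ∀ i j, N i j = if i ∉ S ∧ j ∉ S then |M i j| else 0) :
    |isingCond M θ (fun σ => σ v = true)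
        (fun σ => (∀ w ∈ S, σ w = x w) ∧ σ u = true) -
      isingCond M θ (fun σ => σ v = true)
        (fun σ => (∀ w ∈ S, σ w = x w) ∧ σ u = false)|
      ≤ ∑' k : ℕ, (N ^ k) v u := by
  have hrow (i : Fin n) : ∑ j, |M i j| ≤ b * d :=
    sum_abs_le_of_card_support_le ((abs_nonneg _).trans (hbound v v)) (hbound i) (hsparse i)
  have hN0 (i j : Fin n) : 0 ≤ N i j := by rw [hN]; split_ifs <;> simp
  have hNrow (i : Fin n) : ∑ j, N i j ≤ b * d :=
    (sum_le_sum fun j _ => by rw [hN]; split_ifs <;> simp).trans (hrow i)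
  change |influence M θ S x u v| ≤ _
  rcases eq_or_ne v u with rfl | hvu
  · rw [influence_self hv, abs_one]
    simpa using (summable_pow_apply hN0 hNrow hbd v v).le_tsum 0
      fun k _ => pow_apply_nonneg hN0 k v v
  have hstep (i j : Fin n) : (M.map abs).firstPassageStep S u i j ≤ N i j := by
    rw [firstPassageStep, of_apply, hN]
    split_ifs with hkill hfree hfree'
    · exact abs_nonneg _
    · exact le_rfl
    · exact le_rfl
    · exact absurd ⟨fun hi => hkill (.inl (mem_insert_of_mem hi)), fun hj => hkill (.inr hj)⟩ hfree'
  calc |influence M θ S x u v| ≤ (M.map abs).firstPassageWeight S u v :=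
        abs_influence_le_firstPassageWeight θ hrow hbd hsymm hdiag S x u v hu hv hvu
    _ ≤ ∑' k, (N ^ k) v u :=
        firstPassageWeight_le_tsum_pow (fun _ _ => abs_nonneg _) hstep hNrow hbd v

/-- Correlation decay bound: the influence of `u` on `v` under conditioning on
a censored set `S` is bounded by `Σ_k (N^k)_{v,u}` where `N` is `|M|` restricted off `S`. -/
theorem stmt1 {n : ℕ} (b : ℝ) (d : ℕ) (hb : 0 < b) (hd : 0 < d) (hn : 0 < n)
    (hbd : b * d < 1)
    (M : Matrix (Fin n) (Fin n) ℝ) (θ : Fin n → ℝ)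
    (hsymm : M.IsSymm) (hdiag : ∀ i, M i i = 0)
    (hbound : ∀ i j, |M i j| ≤ b)
    (hsparse : ∀ i, (Finset.univ.filter (fun j => M i j ≠ 0)).card ≤ d)
    (S : Finset (Fin n)) (x : Fin n → Bool) (v u : Fin n)
    (hv : v ∉ S) (hu : u ∉ S)
    (N : Matrix (Fin n) (Fin n) ℝ)
    (hN : ∀ i j, N i j = if i ∉ S ∧ j ∉ S then |M i j| else 0) :
    |isingCond M θ (fun σ => σ v = true)
        (fun σ => (∀ w ∈ S, σ w = x w) ∧ σ u = true) -
      isingCond M θ (fun σ => σ v = true)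
        (fun σ => (∀ w ∈ S, σ w = x w) ∧ σ u = false)|
      ≤ ∑' k : ℕ, (N ^ k) v u :=
  stmt1_general b d hbd M θ hsymm hdiag hbound hsparse S x v u hv hu N hN
end
end

section
/- Let 0 < ε, β < 1 and n be a positive integer. Let X be a random vector in {−1,1}ⁿ with P[X = x] > 0 for all x, such that for all v ∈ [n] and x ∈ {−1,1}ⁿ, Σ_{u ∈ [n]∖{v}} |P[X_u = 1 | X_{−{v,u}} = x_{−{v,u}}, X_v = 1] − P[X_u = 1 | X_{−{v,u}} = x_{−{v,u}}, X_v = −1]| ≤ β. For each v ∈ [n], let f_v : {−1,1}^{n−1} → [0,1] be a function such that Σ_{v=1}^n |f_v(x_{−v}) − P[X_v = 1 | X_{−v} = x_{−v}]| ≤ εn for all x ∈ {−1,1}ⁿ. Then for every T ∈ ℕ and every starting point x⁰ ∈ {−1,1}ⁿ, the distribution of the approximate Glauber chain with update rule f after T steps started from x⁰ is within earthmover distance 2εn/(1−β) + 2n·e^{−(1−β)T/n} of the distribution of X. -/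
open Finset Real
open scoped Classical

noncomputable section

/-- Probability of an event `A` under a distribution `p` on `{-1,1}^n` (encoded by `Bool`s). -/
def pr {n : ℕ} (p : (Fin n → Bool) → ℝ) (A : (Fin n → Bool) → Prop) : ℝ :=
  ∑ σ ∈ Finset.univ.filter (fun σ => A σ), p σ

/-- Conditional probability `P[A | B]` under a distribution `p`. -/
def cpr {n : ℕ} (p : (Fin n → Bool) → ℝ) (A B : (Fin n → Bool) → Prop) : ℝ :=
  pr p (fun σ => A σ ∧ B σ) / pr p B

/-- One-step transition kernel of the (approximate) Glauber dynamics with update rule `f`: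
pick a uniformly random coordinate `v` and resample it to `true` with probability `f v x`. -/
def glauberKernel {n : ℕ} (f : Fin n → (Fin n → Bool) → ℝ) (x y : Fin n → Bool) : ℝ :=
  (1 / (n : ℝ)) * ∑ v : Fin n,
    ((if y = Function.update x v true then f v x else 0) +
      (if y = Function.update x v false then 1 - f v x else 0))

/-- The distribution of the (approximate) Glauber chain with update rule `f` after `T` steps,
started from the deterministic initial state `x0`. -/
def chainDist {n : ℕ} (f : Fin n → (Fin n → Bool) → ℝ) (x0 : Fin n → Bool) :
    ℕ → (Fin n → Bool) → ℝ
  | 0 => fun y => if y = x0 then 1 else 0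
  | T + 1 => fun y => ∑ x : Fin n → Bool, chainDist f x0 T x * glauberKernel f x y

/-- Hamming distance between two configurations. -/
def hammingD {n : ℕ} (x y : Fin n → Bool) : ℕ :=
  (Finset.univ.filter (fun i => x i ≠ y i)).card

/-- The earthmover (transportation) distance between two distributions on `{-1,1}^n`, with
respect to Hamming ground cost: the infimum over couplings of the expected Hamming distance. -/
def emd {n : ℕ} (p q : (Fin n → Bool) → ℝ) : ℝ :=
  sInf { c : ℝ | ∃ μ : (Fin n → Bool) → (Fin n → Bool) → ℝ,
    (∀ x y, 0 ≤ μ x y) ∧ (∀ x, ∑ y, μ x y = p x) ∧ (∀ y, ∑ x, μ x y = q y) ∧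
    c = ∑ x : Fin n → Bool, ∑ y : Fin n → Bool, μ x y * (hammingD x y : ℝ) }

namespace Stmt5Aux

variable {n : ℕ}

/-- The true conditional probability that coordinate `v` is `true`. -/
def fstar (p : (Fin n → Bool) → ℝ) (v : Fin n) (x : Fin n → Bool) : ℝ :=
  cpr p (fun σ => σ v = true) (fun σ => ∀ w, w ≠ v → σ w = x w)

lemma pr_congr (p : (Fin n → Bool) → ℝ) {A B : (Fin n → Bool) → Prop}
    (h : ∀ σ, A σ ↔ B σ) : pr p A = pr p B := by
  have : A = B := funext fun σ => propext (h σ)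
  rw [this]

lemma cpr_congr (p : (Fin n → Bool) → ℝ) {A B B' : (Fin n → Bool) → Prop}
    (h : ∀ σ, B σ ↔ B' σ) : cpr p A B = cpr p A B' := by
  unfold cpr
  rw [pr_congr p h, pr_congr p (A := fun σ => A σ ∧ B σ) (B := fun σ => A σ ∧ B' σ)
    (fun σ => and_congr_right fun _ => h σ)]

lemma update_ne_update (x : Fin n → Bool) (v : Fin n) :
    Function.update x v true ≠ Function.update x v false := by
  intro h
  simpa using congrFun h v

lemma pr_pair (p : (Fin n → Bool) → ℝ) (v : Fin n) (x : Fin n → Bool) :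
    pr p (fun σ => ∀ w, w ≠ v → σ w = x w)
      = p (Function.update x v true) + p (Function.update x v false) := by
  unfold pr
  have hfil : Finset.univ.filter (fun σ : Fin n → Bool => ∀ w, w ≠ v → σ w = x w)
      = {Function.update x v true, Function.update x v false} := by
    ext σ
    simp only [Finset.mem_filter, Finset.mem_univ, true_and, Finset.mem_insert,
      Finset.mem_singleton]
    constructor
    · intro h
      have : σ = Function.update x v (σ v) := by
        funext w
        by_cases hw : w = v
        · subst hw; simp
        · simp [Function.update_of_ne hw, h w hw]
      rcases Bool.dichotomy (σ v) with hb | hb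
      · right; rw [this, hb]
      · left; rw [this, hb]
    · rintro (rfl | rfl) <;> intro w hw <;> simp [Function.update_of_ne hw]
  simp only []
  rw [Finset.filter_congr_decidable, hfil, Finset.sum_pair (update_ne_update x v)]

lemma pr_single (p : (Fin n → Bool) → ℝ) (v : Fin n) (x : Fin n → Bool) :
    pr p (fun σ => σ v = true ∧ ∀ w, w ≠ v → σ w = x w)
      = p (Function.update x v true) := by
  unfold pr
  have hfil : Finset.univ.filter
        (fun σ : Fin n → Bool => σ v = true ∧ ∀ w, w ≠ v → σ w = x w)
      = {Function.update x v true} := by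
    ext σ
    simp only [Finset.mem_filter, Finset.mem_univ, true_and, Finset.mem_singleton]
    constructor
    · rintro ⟨h1, h2⟩
      funext w
      by_cases hw : w = v
      · subst hw; simpa using h1
      · simp [Function.update_of_ne hw, h2 w hw]
    · rintro rfl
      constructor
      · simp
      · intro w hw; simp [Function.update_of_ne hw]
  simp only []
  rw [Finset.filter_congr_decidable, hfil, Finset.sum_singleton]

lemma fstar_eq (p : (Fin n → Bool) → ℝ) (v : Fin n) (x : Fin n → Bool) :
    fstar p v x = p (Function.update x v true)
      / (p (Function.update x v true) + p (Function.update x v false)) := by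
  unfold fstar cpr
  rw [pr_pair, pr_single]

lemma fstar_nonneg {p : (Fin n → Bool) → ℝ} (hpos : ∀ x, 0 < p x) (v : Fin n)
    (x : Fin n → Bool) : 0 ≤ fstar p v x := by
  rw [fstar_eq]
  have h1 := hpos (Function.update x v true)
  have h2 := hpos (Function.update x v false)
  positivity

lemma fstar_le_one {p : (Fin n → Bool) → ℝ} (hpos : ∀ x, 0 < p x) (v : Fin n)
    (x : Fin n → Bool) : fstar p v x ≤ 1 := by
  rw [fstar_eq]
  have h1 := hpos (Function.update x v true)
  have h2 := hpos (Function.update x v false)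
  rw [div_le_one (by linarith)]
  linarith

lemma fstar_update (p : (Fin n → Bool) → ℝ) (v : Fin n) (x : Fin n → Bool) (s : Bool) :
    fstar p v (Function.update x v s) = fstar p v x := by
  rw [fstar_eq, fstar_eq]
  simp [Function.update_idem]


lemma sum_match (p : (Fin n → Bool) → ℝ) (v : Fin n) (y' : Fin n → Bool) (s : Bool)
    (h : (Fin n → Bool) → ℝ) :
    ∑ y : Fin n → Bool, (if y' = Function.update y v s then h y else 0)
      = if y' v = s then h (Function.update y' v true) + h (Function.update y' v false)
        else 0 := by
  by_cases hs : y' v = s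
  · rw [if_pos hs]
    rw [← Finset.sum_filter]
    have hfil : Finset.univ.filter (fun y : Fin n → Bool => y' = Function.update y v s)
        = {Function.update y' v true, Function.update y' v false} := by
      ext y
      simp only [Finset.mem_filter, Finset.mem_univ, true_and, Finset.mem_insert,
        Finset.mem_singleton]
      constructor
      · intro hy
        have : y = Function.update y' v (y v) := by
          funext w
          by_cases hw : w = v
          · subst hw; simp
          · rw [Function.update_of_ne hw]
            rw [hy, Function.update_of_ne hw]
        rcases Bool.dichotomy (y v) with hb | hb
        · right; rw [this, hb]
        · left; rw [this, hb]
      · rintro (rfl | rfl) <;>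
        · funext w
          by_cases hw : w = v
          · subst hw; simp [hs]
          · simp [Function.update_of_ne hw]
    rw [Finset.filter_congr_decidable, hfil, Finset.sum_pair (update_ne_update y' v)]
  · rw [if_neg hs]
    apply Finset.sum_eq_zero
    intro y _
    rw [if_neg]
    intro hy
    exact hs (by rw [hy]; simp)

/-- `p` is stationary for the Glauber kernel with the exact conditionals. -/
lemma stationary {p : (Fin n → Bool) → ℝ} (hpos : ∀ x, 0 < p x) (hn : 0 < n)
    (y' : Fin n → Bool) :
    ∑ y : Fin n → Bool, p y * glauberKernel (fstar p) y y' = p y' := by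
  unfold glauberKernel
  set F : Fin n → (Fin n → Bool) → ℝ := fun v y =>
    ((if y' = Function.update y v true then fstar p v y else 0) +
      (if y' = Function.update y v false then 1 - fstar p v y else 0)) with hF
  have key : ∀ v : Fin n, ∑ y : Fin n → Bool, p y * F v y = p y' := by
    intro v
    have e1 : ∀ y : Fin n → Bool,
        p y * F v y
        = (if y' = Function.update y v true then p y * fstar p v y else 0) +
          (if y' = Function.update y v false then p y * (1 - fstar p v y) else 0) := by
      intro y; rw [hF]; simp only []; split <;> split <;> ring
    rw [Finset.sum_congr rfl fun y _ => e1 y, Finset.sum_add_distrib,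
      sum_match p v y' true _, sum_match p v y' false _]
    set a := p (Function.update y' v true) with ha
    set b := p (Function.update y' v false) with hb
    have hab : 0 < a + b := add_pos (hpos _) (hpos _)
    have h1 : fstar p v (Function.update y' v true) = a / (a + b) := by
      rw [fstar_update, fstar_eq]
    have h2 : fstar p v (Function.update y' v false) = a / (a + b) := by
      rw [fstar_update, fstar_eq]
    rcases Bool.dichotomy (y' v) with hv | hv
    · have hy'b : Function.update y' v false = y' := by
        funext w; by_cases hw : w = v
        · subst hw; simp [hv]
        · simp [Function.update_of_ne hw]
      rw [if_neg (by simp [hv]), if_pos hv, h1, h2]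
      rw [hy'b] at hb
      rw [← hb]
      field_simp
      ring
    · have hy't : Function.update y' v true = y' := by
        funext w; by_cases hw : w = v
        · subst hw; simp [hv]
        · simp [Function.update_of_ne hw]
      rw [if_pos hv, if_neg (by simp [hv]), h1, h2]
      rw [hy't] at ha
      rw [← ha]
      field_simp
      ring
  calc ∑ y : Fin n → Bool, p y * ((1 / (n:ℝ)) * ∑ v : Fin n, F v y)
      = ∑ y : Fin n → Bool, ∑ v : Fin n, (1 / (n:ℝ)) * (p y * F v y) := by
        apply Finset.sum_congr rfl
        intro y _
        rw [Finset.mul_sum, Finset.mul_sum]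
        apply Finset.sum_congr rfl
        intro v _
        ring
    _ = ∑ v : Fin n, ∑ y : Fin n → Bool, (1 / (n:ℝ)) * (p y * F v y) := Finset.sum_comm
    _ = ∑ v : Fin n, (1 / (n:ℝ)) * p y' := by
        apply Finset.sum_congr rfl
        intro v _
        rw [← Finset.mul_sum, key v]
    _ = p y' := by
        rw [Finset.sum_const, Finset.card_univ, Fintype.card_fin, nsmul_eq_mul]
        field_simp


/-- The maximal coupling of one Glauber step for the two chains. -/
def cKer (f g : Fin n → (Fin n → Bool) → ℝ) (x y x' y' : Fin n → Bool) : ℝ :=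
  (1 / (n : ℝ)) * ∑ v : Fin n,
    ((if x' = Function.update x v true ∧ y' = Function.update y v true
        then min (f v x) (g v y) else 0) +
     (if x' = Function.update x v true ∧ y' = Function.update y v false
        then max (f v x - g v y) 0 else 0) +
     (if x' = Function.update x v false ∧ y' = Function.update y v true
        then max (g v y - f v x) 0 else 0) +
     (if x' = Function.update x v false ∧ y' = Function.update y v false
        then 1 - max (f v x) (g v y) else 0))

lemma min_add_max_sub (a b : ℝ) : min a b + max (a - b) 0 = a := by
  rcases le_total a b with h | h
  · rw [min_eq_left h, max_eq_right (by linarith)]; ring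
  · rw [min_eq_right h, max_eq_left (by linarith)]; ring

lemma max_sub_add (a b : ℝ) : max (b - a) 0 + (1 - max a b) = 1 - a := by
  rcases le_total a b with h | h
  · rw [max_eq_left (by linarith), max_eq_right h]; ring
  · rw [max_eq_right (by linarith), max_eq_left h]; ring

lemma max_add_max (a b : ℝ) : max (a - b) 0 + max (b - a) 0 = |a - b| := by
  rcases le_total a b with h | h
  · rw [max_eq_right (by linarith), max_eq_left (by linarith),
      abs_of_nonpos (by linarith)]; ring
  · rw [max_eq_left (by linarith), max_eq_right (by linarith),
      abs_of_nonneg (by linarith)]; ring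

lemma sum_all_min_max (a b : ℝ) :
    min a b + max (a - b) 0 + max (b - a) 0 + (1 - max a b) = 1 := by
  rcases le_total a b with h | h
  · rw [min_eq_left h, max_eq_right (by linarith : a - b ≤ 0),
      max_eq_left (by linarith : (0:ℝ) ≤ b - a), max_eq_right h]; ring
  · rw [min_eq_right h, max_eq_left (by linarith : (0:ℝ) ≤ a - b),
      max_eq_right (by linarith : b - a ≤ 0), max_eq_left h]; ring

lemma cKer_nonneg {f g : Fin n → (Fin n → Bool) → ℝ}
    (hf0 : ∀ v x, 0 ≤ f v x) (hf1 : ∀ v x, f v x ≤ 1)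
    (hg0 : ∀ v x, 0 ≤ g v x) (hg1 : ∀ v x, g v x ≤ 1)
    (x y x' y' : Fin n → Bool) : 0 ≤ cKer f g x y x' y' := by
  unfold cKer
  apply mul_nonneg (by positivity)
  apply Finset.sum_nonneg
  intro v _
  have h1 : (0:ℝ) ≤ min (f v x) (g v y) := le_min (hf0 v x) (hg0 v y)
  have h2 : (0:ℝ) ≤ max (f v x - g v y) 0 := le_max_right _ _
  have h3 : (0:ℝ) ≤ max (g v y - f v x) 0 := le_max_right _ _
  have h4 : (0:ℝ) ≤ 1 - max (f v x) (g v y) := by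
    have := max_le (hf1 v x) (hg1 v y); linarith
  positivity

lemma sum_ite_pair_left (c : ℝ) (x' A B : Fin n → Bool) :
    ∑ y' : Fin n → Bool, (if x' = A ∧ y' = B then c else 0)
      = if x' = A then c else 0 := by
  by_cases h : x' = A <;> simp [h]

lemma sum_ite_pair_right (c : ℝ) (y' A B : Fin n → Bool) :
    ∑ x' : Fin n → Bool, (if x' = A ∧ y' = B then c else 0)
      = if y' = B then c else 0 := by
  by_cases h : y' = B <;> simp [h]

/-- The first marginal of the coupling kernel is the approximate Glauber kernel. -/
lemma cKer_margX {f g : Fin n → (Fin n → Bool) → ℝ} (x y x' : Fin n → Bool) :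
    ∑ y' : Fin n → Bool, cKer f g x y x' y' = glauberKernel f x x' := by
  unfold cKer glauberKernel
  rw [← Finset.mul_sum, Finset.sum_comm]
  congr 1
  apply Finset.sum_congr rfl
  intro v _
  rw [Finset.sum_add_distrib, Finset.sum_add_distrib, Finset.sum_add_distrib,
    sum_ite_pair_left, sum_ite_pair_left, sum_ite_pair_left, sum_ite_pair_left]
  by_cases h1 : x' = Function.update x v true
  · have h2 : ¬ x' = Function.update x v false := by
      rw [h1]; exact update_ne_update x v
    simp only [if_pos h1, if_neg h2, add_zero, zero_add]
    rw [min_add_max_sub]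
  · by_cases h2 : x' = Function.update x v false
    · simp only [if_neg h1, if_pos h2, add_zero, zero_add]
      rw [max_sub_add]
    · simp [h1, h2]

/-- The second marginal of the coupling kernel is the exact Glauber kernel. -/
lemma cKer_margY {f g : Fin n → (Fin n → Bool) → ℝ} (x y y' : Fin n → Bool) :
    ∑ x' : Fin n → Bool, cKer f g x y x' y' = glauberKernel g y y' := by
  unfold cKer glauberKernel
  rw [← Finset.mul_sum, Finset.sum_comm]
  congr 1
  apply Finset.sum_congr rfl
  intro v _
  rw [Finset.sum_add_distrib, Finset.sum_add_distrib, Finset.sum_add_distrib,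
    sum_ite_pair_right, sum_ite_pair_right, sum_ite_pair_right, sum_ite_pair_right]
  by_cases h1 : y' = Function.update y v true
  · have h2 : ¬ y' = Function.update y v false := by
      rw [h1]; exact update_ne_update y v
    simp only [if_pos h1, if_neg h2, add_zero, zero_add]
    rcases le_total (f v x) (g v y) with h | h
    · rw [min_eq_left h, max_eq_left (by linarith)]; ring
    · rw [min_eq_right h, max_eq_right (by linarith)]; ring
  · by_cases h2 : y' = Function.update y v false
    · simp only [if_neg h1, if_pos h2, add_zero, zero_add]
      rcases le_total (f v x) (g v y) with h | h
      · rw [max_eq_right (by linarith : f v x - g v y ≤ 0), max_eq_right h]; ring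
      · rw [max_eq_left (by linarith : (0:ℝ) ≤ f v x - g v y), max_eq_left h]; ring
    · simp [h1, h2]

/-- Hamming distance after updating coordinate `v` in both configurations. -/
lemma hamming_update (x y : Fin n → Bool) (v : Fin n) (s t : Bool) :
    (hammingD (Function.update x v s) (Function.update y v t) : ℝ)
      = (hammingD x y : ℝ) - (if x v = y v then 0 else 1) + (if s = t then 0 else 1) := by
  unfold hammingD
  set A := Finset.univ.filter (fun i => x i ≠ y i) with hA
  set A' := Finset.univ.filter
    (fun i => Function.update x v s i ≠ Function.update y v t i) with hA'
  have hmemA : ∀ i, i ∈ A ↔ x i ≠ y i := by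
    intro i; rw [hA]; simp
  have hmemA' : ∀ i, i ∈ A' ↔ Function.update x v s i ≠ Function.update y v t i := by
    intro i; rw [hA']; simp
  have h1 : ((A.erase v).card : ℝ) = (A.card : ℝ) - (if x v = y v then 0 else 1) := by
    by_cases hv : x v = y v
    · rw [if_pos hv, Finset.erase_eq_of_notMem (by rw [hmemA]; simp [hv])]; ring
    · rw [if_neg hv]
      have hvA : v ∈ A := by rw [hmemA]; exact hv
      have := Finset.card_erase_add_one hvA
      push_cast [← this]
      ring
  have h2 : ((A'.card) : ℝ) = ((A.erase v).card : ℝ) + (if s = t then 0 else 1) := by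
    by_cases hst : s = t
    · rw [if_pos hst]
      have : A' = A.erase v := by
        ext i
        rw [Finset.mem_erase, hmemA', hmemA]
        by_cases hi : i = v
        · subst hi; simp [hst]
        · simp [Function.update_of_ne hi, hi]
      rw [this]; ring
    · rw [if_neg hst]
      have : A' = insert v (A.erase v) := by
        ext i
        rw [Finset.mem_insert, Finset.mem_erase, hmemA', hmemA]
        by_cases hi : i = v
        · subst hi; simp [hst]
        · simp [Function.update_of_ne hi, hi]
      rw [this, Finset.card_insert_of_notMem (Finset.notMem_erase v A)]
      push_cast
      ring
  rw [h2, h1]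


/-- Single-site flip: total influence bound from the Dobrushin condition. -/
lemma dob_single {p : (Fin n → Bool) → ℝ} {β : ℝ}
    (hdob : ∀ (v : Fin n) (x : Fin n → Bool),
      ∑ u ∈ Finset.univ.filter (fun u => u ≠ v),
        |cpr p (fun σ => σ u = true)
            (fun σ => (∀ w, w ≠ v → w ≠ u → σ w = x w) ∧ σ v = true) -
          cpr p (fun σ => σ u = true)
            (fun σ => (∀ w, w ≠ v → w ≠ u → σ w = x w) ∧ σ v = false)| ≤ β)
    (z : Fin n → Bool) (w : Fin n) :
    ∑ v : Fin n, |fstar p v (Function.update z w true)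
      - fstar p v (Function.update z w false)| ≤ β := by
  have hid : ∀ (u : Fin n), u ≠ w → ∀ c : Bool,
      fstar p u (Function.update z w c)
        = cpr p (fun σ => σ u = true)
            (fun σ => (∀ w', w' ≠ w → w' ≠ u → σ w' = z w') ∧ σ w = c) := by
    intro u hu c
    unfold fstar
    apply cpr_congr
    intro σ
    constructor
    · intro h
      refine ⟨fun w' hw' hw'u => ?_, ?_⟩
      · rw [h w' hw'u, Function.update_of_ne hw']
      · rw [h w (Ne.symm hu), Function.update_self]
    · rintro ⟨h1, h2⟩ w' hw'
      by_cases hw : w' = w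
      · subst hw; rw [h2, Function.update_self]
      · rw [h1 w' hw hw', Function.update_of_ne hw]
  rw [← Finset.add_sum_erase _ _ (Finset.mem_univ w)]
  have hzero : |fstar p w (Function.update z w true)
      - fstar p w (Function.update z w false)| = 0 := by
    rw [fstar_update, fstar_update, sub_self, abs_zero]
  rw [hzero, zero_add]
  have herase : Finset.univ.erase w = Finset.univ.filter (fun u : Fin n => u ≠ w) := by
    rw [Finset.filter_ne']
  rw [herase]
  calc ∑ u ∈ Finset.univ.filter (fun u : Fin n => u ≠ w),
        |fstar p u (Function.update z w true) - fstar p u (Function.update z w false)|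
      = ∑ u ∈ Finset.univ.filter (fun u : Fin n => u ≠ w),
        |cpr p (fun σ => σ u = true)
            (fun σ => (∀ w', w' ≠ w → w' ≠ u → σ w' = z w') ∧ σ w = true) -
          cpr p (fun σ => σ u = true)
            (fun σ => (∀ w', w' ≠ w → w' ≠ u → σ w' = z w') ∧ σ w = false)| := by
        apply Finset.sum_congr rfl
        intro u hu
        rw [Finset.mem_filter] at hu
        rw [hid u hu.2 true, hid u hu.2 false]
    _ ≤ β := hdob w z

/-- Dobrushin sum bound: total variation of conditionals along Hamming distance. -/
lemma dob_sum {p : (Fin n → Bool) → ℝ} {β : ℝ} (hβ0 : 0 ≤ β)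
    (hdob : ∀ (v : Fin n) (x : Fin n → Bool),
      ∑ u ∈ Finset.univ.filter (fun u => u ≠ v),
        |cpr p (fun σ => σ u = true)
            (fun σ => (∀ w, w ≠ v → w ≠ u → σ w = x w) ∧ σ v = true) -
          cpr p (fun σ => σ u = true)
            (fun σ => (∀ w, w ≠ v → w ≠ u → σ w = x w) ∧ σ v = false)| ≤ β) :
    ∀ (k : ℕ) (x y : Fin n → Bool), hammingD x y = k →
      ∑ v : Fin n, |fstar p v x - fstar p v y| ≤ β * k := by
  intro k
  induction k with
  | zero =>
    intro x y hk
    have hxy : x = y := by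
      funext i
      by_contra hi
      have : i ∈ Finset.univ.filter (fun i => x i ≠ y i) := by simp [hi]
      rw [Finset.card_eq_zero.mp hk] at this
      exact absurd this (Finset.notMem_empty i)
    subst hxy
    simp
  | succ k ih =>
    intro x y hk
    have hne : (Finset.univ.filter (fun i => x i ≠ y i)).Nonempty := by
      rw [← Finset.card_pos]
      unfold hammingD at hk
      omega
    obtain ⟨w, hw⟩ := hne
    rw [Finset.mem_filter] at hw
    have hwne : x w ≠ y w := hw.2
    set y'' := Function.update y w (x w) with hy''
    have hd : hammingD x y'' = k := by
      unfold hammingD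
      have : Finset.univ.filter (fun i => x i ≠ y'' i)
          = (Finset.univ.filter (fun i => x i ≠ y i)).erase w := by
        ext i
        simp only [Finset.mem_filter, Finset.mem_univ, true_and, Finset.mem_erase]
        by_cases hi : i = w
        · subst hi; simp [hy'']
        · rw [hy'']; simp [Function.update_of_ne hi, hi]
      rw [this, Finset.card_erase_of_mem (by simp [hwne])]
      unfold hammingD at hk
      omega
    have tri : ∑ v : Fin n, |fstar p v x - fstar p v y|
        ≤ (∑ v : Fin n, |fstar p v x - fstar p v y''|)
          + ∑ v : Fin n, |fstar p v y'' - fstar p v y| := by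
      rw [← Finset.sum_add_distrib]
      apply Finset.sum_le_sum
      intro v _
      exact abs_sub_le _ _ _
    have h1 : ∑ v : Fin n, |fstar p v x - fstar p v y''| ≤ β * k := ih x y'' hd
    have h2 : ∑ v : Fin n, |fstar p v y'' - fstar p v y| ≤ β := by
      rcases Bool.dichotomy (x w) with hxw | hxw
      · -- x w = false, so y w = true
        have hyw : y w = true := by
          rcases Bool.dichotomy (y w) with h | h
          · exact absurd (hxw.trans h.symm) hwne
          · exact h
        calc ∑ v : Fin n, |fstar p v y'' - fstar p v y|
            = ∑ v : Fin n, |fstar p v (Function.update y w true)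
                - fstar p v (Function.update y w false)| := by
              apply Finset.sum_congr rfl
              intro v _
              have e1 : Function.update y w true = y := by
                funext i
                by_cases hi : i = w
                · subst hi; simp [hyw]
                · simp [Function.update_of_ne hi]
              rw [hy'', hxw, e1, abs_sub_comm]
          _ ≤ β := dob_single hdob y w
      · -- x w = true, so y w = false
        have hyw : y w = false := by
          rcases Bool.dichotomy (y w) with h | h
          · exact h
          · exact absurd (hxw.trans h.symm) hwne
        calc ∑ v : Fin n, |fstar p v y'' - fstar p v y|
            = ∑ v : Fin n, |fstar p v (Function.update y w true)
                - fstar p v (Function.update y w false)| := by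
              apply Finset.sum_congr rfl
              intro v _
              have e1 : Function.update y w false = y := by
                funext i
                by_cases hi : i = w
                · subst hi; simp [hyw]
                · simp [Function.update_of_ne hi]
              rw [hy'', hxw, e1]
          _ ≤ β := dob_single hdob y w
    calc ∑ v : Fin n, |fstar p v x - fstar p v y|
        ≤ β * k + β := by linarith
      _ = β * (k + 1 : ℕ) := by push_cast; ring


lemma sum_sum_ite_mul {c : ℝ} {A B : Fin n → Bool}
    (F : (Fin n → Bool) → (Fin n → Bool) → ℝ) :
    ∑ x' : Fin n → Bool, ∑ y' : Fin n → Bool,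
      (if x' = A ∧ y' = B then c else 0) * F x' y' = c * F A B := by
  have step : ∀ x' : Fin n → Bool,
      ∑ y' : Fin n → Bool, (if x' = A ∧ y' = B then c else 0) * F x' y'
        = if x' = A then c * F x' B else 0 := by
    intro x'
    by_cases hx : x' = A
    · simp [hx, ite_mul, Finset.sum_ite_eq']
    · simp [hx]
  rw [Finset.sum_congr rfl fun x' _ => step x']
  simp [Finset.sum_ite_eq']

lemma hamming_card_sum (x y : Fin n → Bool) :
    (hammingD x y : ℝ) = ∑ v : Fin n, (if x v = y v then (0:ℝ) else 1) := by
  unfold hammingD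
  rw [Finset.card_filter]
  push_cast
  apply Finset.sum_congr rfl
  intro v _
  by_cases h : x v = y v <;> simp [h]

lemma hamming_le (x y : Fin n → Bool) : (hammingD x y : ℝ) ≤ n := by
  have : hammingD x y ≤ n := by
    unfold hammingD
    calc (Finset.univ.filter (fun i => x i ≠ y i)).card
        ≤ Finset.univ.card := Finset.card_filter_le _ _
      _ = n := by rw [Finset.card_univ, Fintype.card_fin]
  exact_mod_cast this

/-- The pointwise one-step contraction/drift estimate for the coupling kernel. -/
lemma step_drift (hn : 0 < n) {f g : Fin n → (Fin n → Bool) → ℝ} {ε β : ℝ}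
    (happ : ∀ x : Fin n → Bool, ∑ v : Fin n, |f v x - g v x| ≤ ε * n)
    (hgsum : ∀ x y : Fin n → Bool,
      ∑ v : Fin n, |g v x - g v y| ≤ β * (hammingD x y : ℝ))
    (x y : Fin n → Bool) :
    ∑ x' : Fin n → Bool, ∑ y' : Fin n → Bool,
        cKer f g x y x' y' * (hammingD x' y' : ℝ)
      ≤ (1 - (1 - β) / n) * (hammingD x y : ℝ) + ε := by
  set D : ℝ := (hammingD x y : ℝ) with hD
  have hD0 : 0 ≤ D := by rw [hD]; positivity
  set Bv : Fin n → (Fin n → Bool) → (Fin n → Bool) → ℝ := fun v x' y' =>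
    ((if x' = Function.update x v true ∧ y' = Function.update y v true
        then min (f v x) (g v y) else 0) +
     (if x' = Function.update x v true ∧ y' = Function.update y v false
        then max (f v x - g v y) 0 else 0) +
     (if x' = Function.update x v false ∧ y' = Function.update y v true
        then max (g v y - f v x) 0 else 0) +
     (if x' = Function.update x v false ∧ y' = Function.update y v false
        then 1 - max (f v x) (g v y) else 0)) with hBv
  have inner : ∀ v : Fin n,
      ∑ x' : Fin n → Bool, ∑ y' : Fin n → Bool, Bv v x' y' * (hammingD x' y' : ℝ)
        = (D - (if x v = y v then 0 else 1)) + |f v x - g v y| := by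
    intro v
    set e : ℝ := (if x v = y v then 0 else 1) with he
    have expand : ∀ x' y' : Fin n → Bool, Bv v x' y' * (hammingD x' y' : ℝ)
        = (if x' = Function.update x v true ∧ y' = Function.update y v true
            then min (f v x) (g v y) else 0) * (hammingD x' y' : ℝ) +
          ((if x' = Function.update x v true ∧ y' = Function.update y v false
            then max (f v x - g v y) 0 else 0) * (hammingD x' y' : ℝ) +
          ((if x' = Function.update x v false ∧ y' = Function.update y v true
            then max (g v y - f v x) 0 else 0) * (hammingD x' y' : ℝ) +
          (if x' = Function.update x v false ∧ y' = Function.update y v false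
            then 1 - max (f v x) (g v y) else 0) * (hammingD x' y' : ℝ))) := by
      intro x' y'; rw [hBv]; ring
    rw [Finset.sum_congr rfl fun x' _ => Finset.sum_congr rfl fun y' _ => expand x' y']
    rw [Finset.sum_congr rfl fun x' _ => Finset.sum_add_distrib, Finset.sum_add_distrib,
      Finset.sum_congr rfl fun x' _ => Finset.sum_add_distrib, Finset.sum_add_distrib,
      Finset.sum_congr rfl fun x' _ => Finset.sum_add_distrib, Finset.sum_add_distrib,
      sum_sum_ite_mul, sum_sum_ite_mul, sum_sum_ite_mul, sum_sum_ite_mul,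
      hamming_update x y v true true, hamming_update x y v true false,
      hamming_update x y v false true, hamming_update x y v false false]
    rw [← hD, ← he]
    have hs := sum_all_min_max (f v x) (g v y)
    have habs := max_add_max (f v x) (g v y)
    have htt : (if (true : Bool) = true then (0:ℝ) else 1) = 0 := by simp
    have hff : (if (false : Bool) = false then (0:ℝ) else 1) = 0 := by simp
    have htf : (if (true : Bool) = false then (0:ℝ) else 1) = 1 := by simp
    have hft : (if (false : Bool) = true then (0:ℝ) else 1) = 1 := by simp
    rw [htt, hff, htf, hft]
    linear_combination (D - e) * hs + habs
  have main : ∑ x' : Fin n → Bool, ∑ y' : Fin n → Bool,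
      cKer f g x y x' y' * (hammingD x' y' : ℝ)
      = (1 / (n:ℝ)) * ∑ v : Fin n,
          ((D - (if x v = y v then 0 else 1)) + |f v x - g v y|) := by
    calc ∑ x' : Fin n → Bool, ∑ y' : Fin n → Bool,
          cKer f g x y x' y' * (hammingD x' y' : ℝ)
        = ∑ x' : Fin n → Bool, ∑ y' : Fin n → Bool, (1 / (n:ℝ)) *
            ∑ v : Fin n, Bv v x' y' * (hammingD x' y' : ℝ) := by
          apply Finset.sum_congr rfl; intro x' _
          apply Finset.sum_congr rfl; intro y' _
          have : cKer f g x y x' y' = (1 / (n:ℝ)) * ∑ v : Fin n, Bv v x' y' := rfl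
          rw [this, mul_assoc, Finset.sum_mul]
      _ = (1 / (n:ℝ)) * ∑ v : Fin n, ∑ x' : Fin n → Bool, ∑ y' : Fin n → Bool,
            Bv v x' y' * (hammingD x' y' : ℝ) := by
          have e1 : ∀ x' : Fin n → Bool,
              ∑ y' : Fin n → Bool,
                (1 / (n:ℝ)) * ∑ v : Fin n, Bv v x' y' * (hammingD x' y' : ℝ)
              = (1 / (n:ℝ)) * ∑ y' : Fin n → Bool, ∑ v : Fin n,
                  Bv v x' y' * (hammingD x' y' : ℝ) := by
            intro x'
            rw [Finset.mul_sum]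
          rw [Finset.sum_congr rfl fun x' _ => e1 x', ← Finset.mul_sum]
          congr 1
          calc ∑ x' : Fin n → Bool, ∑ y' : Fin n → Bool, ∑ v : Fin n,
                Bv v x' y' * (hammingD x' y' : ℝ)
              = ∑ x' : Fin n → Bool, ∑ v : Fin n, ∑ y' : Fin n → Bool,
                  Bv v x' y' * (hammingD x' y' : ℝ) :=
                Finset.sum_congr rfl fun x' _ => Finset.sum_comm
            _ = ∑ v : Fin n, ∑ x' : Fin n → Bool, ∑ y' : Fin n → Bool,
                  Bv v x' y' * (hammingD x' y' : ℝ) := Finset.sum_comm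
      _ = (1 / (n:ℝ)) * ∑ v : Fin n,
            ((D - (if x v = y v then 0 else 1)) + |f v x - g v y|) := by
          rw [Finset.sum_congr rfl fun v _ => inner v]
  rw [main]
  have hnR : (0:ℝ) < n := by exact_mod_cast hn
  have split : ∑ v : Fin n, ((D - (if x v = y v then 0 else 1)) + |f v x - g v y|)
      = ((n:ℝ) * D - D) + ∑ v : Fin n, |f v x - g v y| := by
    rw [Finset.sum_add_distrib, Finset.sum_sub_distrib, Finset.sum_const,
      Finset.card_univ, Fintype.card_fin, ← hamming_card_sum, ← hD, nsmul_eq_mul]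
  have habs2 : ∑ v : Fin n, |f v x - g v y| ≤ ε * n + β * D := by
    calc ∑ v : Fin n, |f v x - g v y|
        ≤ ∑ v : Fin n, (|f v x - g v x| + |g v x - g v y|) :=
          Finset.sum_le_sum fun v _ => abs_sub_le _ _ _
      _ = (∑ v : Fin n, |f v x - g v x|) + ∑ v : Fin n, |g v x - g v y| :=
          Finset.sum_add_distrib
      _ ≤ ε * n + β * D := by
          apply add_le_add (happ x)
          rw [hD]
          exact hgsum x y
  calc (1 / (n:ℝ)) * ∑ v : Fin n,
        ((D - (if x v = y v then 0 else 1)) + |f v x - g v y|)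
      ≤ (1 / (n:ℝ)) * (((n:ℝ) * D - D) + (ε * n + β * D)) := by
        apply mul_le_mul_of_nonneg_left _ (by positivity)
        rw [split]
        linarith
    _ = (1 - (1 - β) / n) * D + ε := by
        field_simp
        ring


/-- The coupled chain: approximate chain from `x0` coupled with the stationary exact chain. -/
def cc (f g : Fin n → (Fin n → Bool) → ℝ) (p : (Fin n → Bool) → ℝ) (x0 : Fin n → Bool) :
    ℕ → (Fin n → Bool) → (Fin n → Bool) → ℝ
  | 0 => fun x y => (if x = x0 then 1 else 0) * p y
  | T + 1 => fun x' y' => ∑ x : Fin n → Bool, ∑ y : Fin n → Bool,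
      cc f g p x0 T x y * cKer f g x y x' y'

lemma sum4_swap (h : (Fin n → Bool) → (Fin n → Bool) → (Fin n → Bool) → (Fin n → Bool) → ℝ) :
    ∑ x' : Fin n → Bool, ∑ y' : Fin n → Bool, ∑ x : Fin n → Bool, ∑ y : Fin n → Bool,
        h x y x' y'
      = ∑ x : Fin n → Bool, ∑ y : Fin n → Bool, ∑ x' : Fin n → Bool, ∑ y' : Fin n → Bool,
        h x y x' y' := by
  calc ∑ x' : Fin n → Bool, ∑ y' : Fin n → Bool, ∑ x : Fin n → Bool, ∑ y : Fin n → Bool,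
        h x y x' y'
      = ∑ x' : Fin n → Bool, ∑ x : Fin n → Bool, ∑ y' : Fin n → Bool, ∑ y : Fin n → Bool,
        h x y x' y' := Finset.sum_congr rfl fun x' _ => Finset.sum_comm
    _ = ∑ x : Fin n → Bool, ∑ x' : Fin n → Bool, ∑ y' : Fin n → Bool, ∑ y : Fin n → Bool,
        h x y x' y' := Finset.sum_comm
    _ = ∑ x : Fin n → Bool, ∑ x' : Fin n → Bool, ∑ y : Fin n → Bool, ∑ y' : Fin n → Bool,
        h x y x' y' := Finset.sum_congr rfl fun x _ =>
          Finset.sum_congr rfl fun x' _ => Finset.sum_comm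
    _ = ∑ x : Fin n → Bool, ∑ y : Fin n → Bool, ∑ x' : Fin n → Bool, ∑ y' : Fin n → Bool,
        h x y x' y' := Finset.sum_congr rfl fun x _ => Finset.sum_comm

lemma cc_nonneg {f g : Fin n → (Fin n → Bool) → ℝ} {p : (Fin n → Bool) → ℝ}
    {x0 : Fin n → Bool} (hp : ∀ y, 0 ≤ p y)
    (hker : ∀ x y x' y', 0 ≤ cKer f g x y x' y') :
    ∀ T x y, 0 ≤ cc f g p x0 T x y := by
  intro T
  induction T with
  | zero =>
    intro x y
    simp only [cc]
    apply mul_nonneg _ (hp y)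
    split <;> norm_num
  | succ T ih =>
    intro x y
    simp only [cc]
    apply Finset.sum_nonneg
    intro a _
    apply Finset.sum_nonneg
    intro b _
    exact mul_nonneg (ih a b) (hker a b x y)

lemma cc_margX {f g : Fin n → (Fin n → Bool) → ℝ} {p : (Fin n → Bool) → ℝ}
    {x0 : Fin n → Bool} (hsum : ∑ y, p y = 1) :
    ∀ T x, ∑ y : Fin n → Bool, cc f g p x0 T x y = chainDist f x0 T x := by
  intro T
  induction T with
  | zero =>
    intro x
    simp only [cc, chainDist]
    rw [← Finset.mul_sum, hsum, mul_one]
  | succ T ih =>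
    intro x'
    simp only [cc, chainDist]
    calc ∑ y' : Fin n → Bool, ∑ x : Fin n → Bool, ∑ y : Fin n → Bool,
          cc f g p x0 T x y * cKer f g x y x' y'
        = ∑ x : Fin n → Bool, ∑ y' : Fin n → Bool, ∑ y : Fin n → Bool,
          cc f g p x0 T x y * cKer f g x y x' y' := Finset.sum_comm
      _ = ∑ x : Fin n → Bool, ∑ y : Fin n → Bool, ∑ y' : Fin n → Bool,
          cc f g p x0 T x y * cKer f g x y x' y' :=
          Finset.sum_congr rfl fun x _ => Finset.sum_comm
      _ = ∑ x : Fin n → Bool, ∑ y : Fin n → Bool,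
          cc f g p x0 T x y * glauberKernel f x x' := by
          apply Finset.sum_congr rfl; intro x _
          apply Finset.sum_congr rfl; intro y _
          rw [← Finset.mul_sum, cKer_margX]
      _ = ∑ x : Fin n → Bool, chainDist f x0 T x * glauberKernel f x x' := by
          apply Finset.sum_congr rfl; intro x _
          rw [← Finset.sum_mul, ih x]

lemma cc_margY {f g : Fin n → (Fin n → Bool) → ℝ} {p : (Fin n → Bool) → ℝ}
    {x0 : Fin n → Bool}
    (hstat : ∀ y', ∑ y : Fin n → Bool, p y * glauberKernel g y y' = p y') :
    ∀ T y, ∑ x : Fin n → Bool, cc f g p x0 T x y = p y := by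
  intro T
  induction T with
  | zero =>
    intro y
    simp only [cc]
    rw [← Finset.sum_mul]
    simp
  | succ T ih =>
    intro y'
    simp only [cc]
    calc ∑ x' : Fin n → Bool, ∑ x : Fin n → Bool, ∑ y : Fin n → Bool,
          cc f g p x0 T x y * cKer f g x y x' y'
        = ∑ x : Fin n → Bool, ∑ x' : Fin n → Bool, ∑ y : Fin n → Bool,
          cc f g p x0 T x y * cKer f g x y x' y' := Finset.sum_comm
      _ = ∑ x : Fin n → Bool, ∑ y : Fin n → Bool, ∑ x' : Fin n → Bool,
          cc f g p x0 T x y * cKer f g x y x' y' :=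
          Finset.sum_congr rfl fun x _ => Finset.sum_comm
      _ = ∑ x : Fin n → Bool, ∑ y : Fin n → Bool,
          cc f g p x0 T x y * glauberKernel g y y' := by
          apply Finset.sum_congr rfl; intro x _
          apply Finset.sum_congr rfl; intro y _
          rw [← Finset.mul_sum, cKer_margY]
      _ = ∑ y : Fin n → Bool, ∑ x : Fin n → Bool,
          cc f g p x0 T x y * glauberKernel g y y' := Finset.sum_comm
      _ = ∑ y : Fin n → Bool, p y * glauberKernel g y y' := by
          apply Finset.sum_congr rfl; intro y _
          rw [← Finset.sum_mul, ih y]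
      _ = p y' := hstat y'

lemma cc_mass {f g : Fin n → (Fin n → Bool) → ℝ} {p : (Fin n → Bool) → ℝ}
    {x0 : Fin n → Bool} (hsum : ∑ y, p y = 1)
    (hstat : ∀ y', ∑ y : Fin n → Bool, p y * glauberKernel g y y' = p y') (T : ℕ) :
    ∑ x : Fin n → Bool, ∑ y : Fin n → Bool, cc f g p x0 T x y = 1 := by
  rw [Finset.sum_comm]
  calc ∑ y : Fin n → Bool, ∑ x : Fin n → Bool, cc f g p x0 T x y
      = ∑ y : Fin n → Bool, p y := Finset.sum_congr rfl fun y _ => cc_margY hstat T y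
    _ = 1 := hsum

/-- One-step recursion for the expected coupled Hamming distance. -/
lemma cc_drift_step (hn : 0 < n) {f g : Fin n → (Fin n → Bool) → ℝ}
    {p : (Fin n → Bool) → ℝ} {x0 : Fin n → Bool} {ε β : ℝ}
    (hp : ∀ y, 0 ≤ p y) (hsum : ∑ y, p y = 1)
    (hker : ∀ x y x' y', 0 ≤ cKer f g x y x' y')
    (hstat : ∀ y', ∑ y : Fin n → Bool, p y * glauberKernel g y y' = p y')
    (happ : ∀ x : Fin n → Bool, ∑ v : Fin n, |f v x - g v x| ≤ ε * n)
    (hgsum : ∀ x y : Fin n → Bool,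
      ∑ v : Fin n, |g v x - g v y| ≤ β * (hammingD x y : ℝ)) (T : ℕ) :
    ∑ x : Fin n → Bool, ∑ y : Fin n → Bool,
        cc f g p x0 (T + 1) x y * (hammingD x y : ℝ)
      ≤ (1 - (1 - β) / n) *
          (∑ x : Fin n → Bool, ∑ y : Fin n → Bool,
            cc f g p x0 T x y * (hammingD x y : ℝ)) + ε := by
  have expand : ∑ x' : Fin n → Bool, ∑ y' : Fin n → Bool,
      cc f g p x0 (T + 1) x' y' * (hammingD x' y' : ℝ)
      = ∑ x : Fin n → Bool, ∑ y : Fin n → Bool, cc f g p x0 T x y *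
          (∑ x' : Fin n → Bool, ∑ y' : Fin n → Bool,
            cKer f g x y x' y' * (hammingD x' y' : ℝ)) := by
    calc ∑ x' : Fin n → Bool, ∑ y' : Fin n → Bool,
          cc f g p x0 (T + 1) x' y' * (hammingD x' y' : ℝ)
        = ∑ x' : Fin n → Bool, ∑ y' : Fin n → Bool, ∑ x : Fin n → Bool, ∑ y : Fin n → Bool,
            cc f g p x0 T x y * (cKer f g x y x' y' * (hammingD x' y' : ℝ)) := by
          apply Finset.sum_congr rfl; intro x' _
          apply Finset.sum_congr rfl; intro y' _
          simp only [cc]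
          rw [Finset.sum_mul]
          apply Finset.sum_congr rfl; intro x _
          rw [Finset.sum_mul]
          apply Finset.sum_congr rfl; intro y _
          ring
      _ = ∑ x : Fin n → Bool, ∑ y : Fin n → Bool, ∑ x' : Fin n → Bool, ∑ y' : Fin n → Bool,
            cc f g p x0 T x y * (cKer f g x y x' y' * (hammingD x' y' : ℝ)) :=
          sum4_swap _
      _ = ∑ x : Fin n → Bool, ∑ y : Fin n → Bool, cc f g p x0 T x y *
            (∑ x' : Fin n → Bool, ∑ y' : Fin n → Bool,
              cKer f g x y x' y' * (hammingD x' y' : ℝ)) := by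
          apply Finset.sum_congr rfl; intro x _
          apply Finset.sum_congr rfl; intro y _
          rw [Finset.mul_sum]
          apply Finset.sum_congr rfl; intro x' _
          rw [Finset.mul_sum]
  rw [expand]
  have hccnn := cc_nonneg (p := p) (x0 := x0) hp hker
  calc ∑ x : Fin n → Bool, ∑ y : Fin n → Bool, cc f g p x0 T x y *
        (∑ x' : Fin n → Bool, ∑ y' : Fin n → Bool,
          cKer f g x y x' y' * (hammingD x' y' : ℝ))
      ≤ ∑ x : Fin n → Bool, ∑ y : Fin n → Bool, cc f g p x0 T x y *
          ((1 - (1 - β) / n) * (hammingD x y : ℝ) + ε) := by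
        apply Finset.sum_le_sum; intro x _
        apply Finset.sum_le_sum; intro y _
        exact mul_le_mul_of_nonneg_left (step_drift hn happ hgsum x y) (hccnn T x y)
    _ = (1 - (1 - β) / n) *
          (∑ x : Fin n → Bool, ∑ y : Fin n → Bool,
            cc f g p x0 T x y * (hammingD x y : ℝ)) +
        ε * (∑ x : Fin n → Bool, ∑ y : Fin n → Bool, cc f g p x0 T x y) := by
        rw [Finset.mul_sum, Finset.mul_sum, ← Finset.sum_add_distrib]
        apply Finset.sum_congr rfl; intro x _
        rw [Finset.mul_sum, Finset.mul_sum, ← Finset.sum_add_distrib]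
        apply Finset.sum_congr rfl; intro y _
        ring
    _ = (1 - (1 - β) / n) *
          (∑ x : Fin n → Bool, ∑ y : Fin n → Bool,
            cc f g p x0 T x y * (hammingD x y : ℝ)) + ε := by
        rw [cc_mass hsum hstat, mul_one]

lemma rec_bound {κ ε C : ℝ} (hκ0 : 0 ≤ κ) (hκ1 : κ < 1) (hε : 0 ≤ ε)
    (D : ℕ → ℝ) (h0 : D 0 ≤ C)
    (hrec : ∀ T, D (T + 1) ≤ κ * D T + ε) :
    ∀ T, D T ≤ κ ^ T * C + ε / (1 - κ) := by
  have hd : 0 ≤ ε / (1 - κ) := div_nonneg hε (by linarith)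
  intro T
  induction T with
  | zero => simpa using by linarith
  | succ T ih =>
    have key : κ * (ε / (1 - κ)) + ε = ε / (1 - κ) := by
      have h1 : (1:ℝ) - κ ≠ 0 := by linarith
      field_simp
      ring
    calc D (T + 1) ≤ κ * D T + ε := hrec T
      _ ≤ κ * (κ ^ T * C + ε / (1 - κ)) + ε := by nlinarith
      _ = κ ^ (T + 1) * C + (κ * (ε / (1 - κ)) + ε) := by ring
      _ = κ ^ (T + 1) * C + ε / (1 - κ) := by rw [key]

end Stmt5Aux

/-- If `X` satisfies the Dobrushin-type condition with constant `β < 1` and each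
`f_v` approximates the conditional law of coordinate `v` with total error `ε n`, then the
approximate Glauber chain after `T` steps is within earthmover distance
`2εn/(1-β) + 2n e^{-(1-β)T/n}` of the law of `X`. -/
theorem stmt5 {n : ℕ} (hn : 0 < n) (ε β : ℝ) (hε0 : 0 < ε) (hε1 : ε < 1)
    (hβ0 : 0 < β) (hβ1 : β < 1)
    (p : (Fin n → Bool) → ℝ) (hpos : ∀ x, 0 < p x) (hsum : ∑ x, p x = 1)
    (hdob : ∀ (v : Fin n) (x : Fin n → Bool),
      ∑ u ∈ Finset.univ.filter (fun u => u ≠ v),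
        |cpr p (fun σ => σ u = true)
            (fun σ => (∀ w, w ≠ v → w ≠ u → σ w = x w) ∧ σ v = true) -
          cpr p (fun σ => σ u = true)
            (fun σ => (∀ w, w ≠ v → w ≠ u → σ w = x w) ∧ σ v = false)| ≤ β)
    (f : Fin n → (Fin n → Bool) → ℝ)
    (hf0 : ∀ v x, 0 ≤ f v x) (hf1 : ∀ v x, f v x ≤ 1)
    (hfind : ∀ (v : Fin n) (x : Fin n → Bool) (s : Bool), f v (Function.update x v s) = f v x)
    (happrox : ∀ x : Fin n → Bool,
      ∑ v : Fin n,
        |f v x - cpr p (fun σ => σ v = true) (fun σ => ∀ w, w ≠ v → σ w = x w)| ≤ ε * n)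
    (T : ℕ) (x0 : Fin n → Bool) :
    emd (chainDist f x0 T) p
      ≤ 2 * ε * n / (1 - β) + 2 * n * Real.exp (-(1 - β) * T / n) := by
  classical
  have hnR : (0:ℝ) < n := by exact_mod_cast hn
  have h1β : (0:ℝ) < 1 - β := by linarith
  set g : Fin n → (Fin n → Bool) → ℝ := Stmt5Aux.fstar p with hg
  have hg0 : ∀ v x, 0 ≤ g v x := fun v x => Stmt5Aux.fstar_nonneg hpos v x
  have hg1 : ∀ v x, g v x ≤ 1 := fun v x => Stmt5Aux.fstar_le_one hpos v x
  have hker : ∀ x y x' y', 0 ≤ Stmt5Aux.cKer f g x y x' y' :=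
    fun x y x' y' => Stmt5Aux.cKer_nonneg hf0 hf1 hg0 hg1 x y x' y'
  have hstat : ∀ y', ∑ y : Fin n → Bool, p y * glauberKernel g y y' = p y' :=
    fun y' => Stmt5Aux.stationary hpos hn y'
  have happ : ∀ x : Fin n → Bool, ∑ v : Fin n, |f v x - g v x| ≤ ε * n :=
    fun x => happrox x
  have hgsum : ∀ x y : Fin n → Bool,
      ∑ v : Fin n, |g v x - g v y| ≤ β * (hammingD x y : ℝ) :=
    fun x y => Stmt5Aux.dob_sum hβ0.le hdob (hammingD x y) x y rfl
  have hp' : ∀ y, 0 ≤ p y := fun y => (hpos y).le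
  set μ : ℕ → (Fin n → Bool) → (Fin n → Bool) → ℝ := Stmt5Aux.cc f g p x0 with hμ
  have hμnn : ∀ T x y, 0 ≤ μ T x y := Stmt5Aux.cc_nonneg hp' hker
  have hmX : ∀ T x, ∑ y : Fin n → Bool, μ T x y = chainDist f x0 T x :=
    Stmt5Aux.cc_margX hsum
  have hmY : ∀ T y, ∑ x : Fin n → Bool, μ T x y = p y :=
    Stmt5Aux.cc_margY hstat
  set D : ℕ → ℝ := fun T => ∑ x : Fin n → Bool, ∑ y : Fin n → Bool,
    μ T x y * (hammingD x y : ℝ) with hD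
  have hbdd : BddBelow { c : ℝ | ∃ ν : (Fin n → Bool) → (Fin n → Bool) → ℝ,
      (∀ x y, 0 ≤ ν x y) ∧ (∀ x, ∑ y, ν x y = chainDist f x0 T x) ∧
      (∀ y, ∑ x, ν x y = p y) ∧
      c = ∑ x : Fin n → Bool, ∑ y : Fin n → Bool, ν x y * (hammingD x y : ℝ) } := by
    refine ⟨0, ?_⟩
    rintro c ⟨ν, hnn, _, _, rfl⟩
    apply Finset.sum_nonneg; intro x _
    apply Finset.sum_nonneg; intro y _
    exact mul_nonneg (hnn x y) (by positivity)
  have hmem : D T ∈ { c : ℝ | ∃ ν : (Fin n → Bool) → (Fin n → Bool) → ℝ,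
      (∀ x y, 0 ≤ ν x y) ∧ (∀ x, ∑ y, ν x y = chainDist f x0 T x) ∧
      (∀ y, ∑ x, ν x y = p y) ∧
      c = ∑ x : Fin n → Bool, ∑ y : Fin n → Bool, ν x y * (hammingD x y : ℝ) } :=
    ⟨μ T, hμnn T, hmX T, hmY T, rfl⟩
  have hemd : emd (chainDist f x0 T) p ≤ D T := csInf_le hbdd hmem
  set κ : ℝ := 1 - (1 - β) / n with hκ
  have hfrac0 : 0 < (1 - β) / (n:ℝ) := by positivity
  have hfrac1 : (1 - β) / (n:ℝ) ≤ 1 := by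
    rw [div_le_one hnR]
    have : (1:ℝ) ≤ n := by exact_mod_cast hn
    linarith
  have hκ0 : 0 ≤ κ := by rw [hκ]; linarith
  have hκ1 : κ < 1 := by rw [hκ]; linarith
  have hrec : ∀ T', D (T' + 1) ≤ κ * D T' + ε :=
    fun T' => Stmt5Aux.cc_drift_step hn hp' hsum hker hstat happ hgsum T'
  have h0 : D 0 ≤ n := by
    calc D 0 ≤ ∑ x : Fin n → Bool, ∑ y : Fin n → Bool, μ 0 x y * (n:ℝ) := by
          apply Finset.sum_le_sum; intro x _
          apply Finset.sum_le_sum; intro y _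
          exact mul_le_mul_of_nonneg_left (Stmt5Aux.hamming_le x y) (hμnn 0 x y)
      _ = (∑ x : Fin n → Bool, ∑ y : Fin n → Bool, μ 0 x y) * (n:ℝ) := by
          rw [Finset.sum_mul]
          apply Finset.sum_congr rfl; intro x _
          rw [Finset.sum_mul]
      _ = n := by rw [Stmt5Aux.cc_mass hsum hstat 0, one_mul]
  have h2 : D T ≤ κ ^ T * n + ε / (1 - κ) :=
    Stmt5Aux.rec_bound hκ0 hκ1 hε0.le D h0 hrec T
  have hκe : κ ^ T ≤ Real.exp (-(1 - β) * T / n) := by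
    have hstep : κ ≤ Real.exp (-(1 - β) / n) := by
      have h := Real.add_one_le_exp (-(1 - β) / (n:ℝ))
      rw [neg_div] at h
      rw [hκ, show -(1 - β) / (n:ℝ) = -((1 - β) / (n:ℝ)) from neg_div _ _]
      linarith
    calc κ ^ T ≤ (Real.exp (-(1 - β) / n)) ^ T := pow_le_pow_left₀ hκ0 hstep T
      _ = Real.exp (-(1 - β) * T / n) := by
          rw [← Real.exp_nat_mul]
          congr 1
          ring
  have heps : ε / (1 - κ) = ε * n / (1 - β) := by
    have h1 : (1:ℝ) - κ = (1 - β) / n := by rw [hκ]; ring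
    rw [h1, div_div_eq_mul_div]
  have e1 : κ ^ T * n ≤ Real.exp (-(1 - β) * T / n) * n :=
    mul_le_mul_of_nonneg_right hκe hnR.le
  have e2 : 0 ≤ ε * n / (1 - β) := by positivity
  have e3 : 0 ≤ Real.exp (-(1 - β) * T / n) * n := by positivity
  have efin : 2 * ε * n / (1 - β) = 2 * (ε * n / (1 - β)) := by ring
  rw [heps] at h2
  calc emd (chainDist f x0 T) p ≤ D T := hemd
    _ ≤ κ ^ T * n + ε * n / (1 - β) := h2
    _ ≤ 2 * ε * n / (1 - β) + 2 * n * Real.exp (-(1 - β) * T / n) := by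
        rw [efin]
        nlinarith [e1, e2, e3]
end
end

section
/- Let b > 0 and let X be drawn from the Ising model on the 8-vertex weighted graph H_b with all biases equal to 0. Then for each x ∈ {−1,1}⁴, P[(X_{v₁}, X_{v₂}, X_{v₃}, X_{v₄}) = x] = (1/16)·(1 + δ_b·x₁x₂x₃x₄), where δ_b = sinh⁴(2b)/(2cosh⁴(2b) − sinh⁴(2b)). -/
open Finset Real
open scoped Classical

noncomputable section

/-- The weighted adjacency matrix of the parity gadget `H_b`: vertices `0,1,2,3` are
`v₁,v₂,v₃,v₄` and vertices `4,5,6,7` are `u₁,u₂,u₃,u₄`; there is an edge of weight `b` between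
`v_i` and `u_i` and of weight `-b` between `v_i` and `u_j` for `j ≠ i`. -/
def Hb (b : ℝ) : Matrix (Fin 8) (Fin 8) ℝ :=
  !![0, 0, 0, 0,  b, -b, -b, -b;
     0, 0, 0, 0, -b,  b, -b, -b;
     0, 0, 0, 0, -b, -b,  b, -b;
     0, 0, 0, 0, -b, -b, -b,  b;
      b, -b, -b, -b, 0, 0, 0, 0;
     -b,  b, -b, -b, 0, 0, 0, 0;
     -b, -b,  b, -b, 0, 0, 0, 0;
     -b, -b, -b,  b, 0, 0, 0, 0]

/-- `δ_b = sinh⁴(2b)/(2cosh⁴(2b) − sinh⁴(2b))`. -/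
def deltab (b : ℝ) : ℝ :=
  Real.sinh (2 * b) ^ 4 / (2 * Real.cosh (2 * b) ^ 4 - Real.sinh (2 * b) ^ 4)

/-!
Summing out the spins `u` of the bipartite graph `H_b` leaves each `v ∈ {±1}⁴` with weight
`∏ⱼ 2 cosh (b (2 vⱼ - ∑ᵢ vᵢ))`, which is `16 cosh⁴(2b)` when `∏ⱼ vⱼ = 1` and `16 cosh(4b)` otherwise,
hence affine in the parity `∏ⱼ vⱼ`. The parity sums to zero over `{±1}⁴`, so the partition function
only sees the constant term, and `cosh(4b) = cosh²(2b) + sinh²(2b)` with `cosh² - sinh² = 1`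
turns the ratio of the two coefficients into `δ_b`.
-/

lemma sum_pi_fin_add {α M : Type*} [Fintype α] [AddCommMonoid M] (m n : ℕ)
    (f : (Fin (m + n) → α) → M) :
    ∑ σ, f σ = ∑ v : Fin m → α, ∑ u : Fin n → α, f (Fin.append v u) := by
  rw [← (Fin.appendEquiv m n).sum_comp, Fintype.sum_prod_type]
  rfl

lemma isingPr_castAdd_eq {m n : ℕ} (M : Matrix (Fin (m + n)) (Fin (m + n)) ℝ)
    (θ : Fin (m + n) → ℝ) (x : Fin m → Bool) :
    isingPr M θ (fun σ => ∀ i, σ (Fin.castAdd n i) = x i) =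
      (∑ u, isingWt M θ (Fin.append x u)) / ∑ τ, isingWt M θ τ := by
  rw [isingPr, Finset.sum_filter, sum_pi_fin_add]
  simp [Fin.append_left, ← funext_iff, isingProb, Finset.sum_div]

def bipartiteCoupling {m n : ℕ} (J : Matrix (Fin m) (Fin n) ℝ) :
    Matrix (Fin (m + n)) (Fin (m + n)) ℝ :=
  Matrix.reindex finSumFinEquiv finSumFinEquiv (Matrix.fromBlocks 0 J J.transpose 0)

lemma isingWt_bipartiteCoupling_append {m n : ℕ} (J : Matrix (Fin m) (Fin n) ℝ)
    (v : Fin m → Bool) (u : Fin n → Bool) :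
    isingWt (bipartiteCoupling J) 0 (Fin.append v u) =
      Real.exp (∑ i, ∑ j, spin (v i) * J i j * spin (u j)) := by
  simp only [isingWt, bipartiteCoupling, Fin.sum_univ_add, Fin.append_left, Fin.append_right,
    Matrix.reindex_apply, Matrix.submatrix_apply, finSumFinEquiv_symm_apply_castAdd,
    finSumFinEquiv_symm_apply_natAdd, Matrix.fromBlocks_apply₁₁, Matrix.fromBlocks_apply₁₂,
    Matrix.fromBlocks_apply₂₁, Matrix.fromBlocks_apply₂₂, Matrix.transpose_apply,
    Matrix.zero_apply, Pi.zero_apply, zero_mul, mul_zero, Finset.sum_const_zero, zero_add,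
    add_zero]
  have h_symm : ∑ j, ∑ i, spin (u j) * J i j * spin (v i) =
      ∑ i, ∑ j, spin (v i) * J i j * spin (u j) := by
    rw [Finset.sum_comm]
    exact Finset.sum_congr rfl fun i _ => Finset.sum_congr rfl fun j _ => by ring
  rw [h_symm]
  ring_nf

lemma sum_exp_mul_spin (h : ℝ) : ∑ s : Bool, Real.exp (h * spin s) = 2 * Real.cosh h := by
  rw [Fintype.sum_bool, Real.cosh_eq]
  simp only [spin, if_true, Bool.false_eq_true, if_false, mul_one, mul_neg]
  ring

lemma sum_isingWt_bipartiteCoupling_append {m n : ℕ} (J : Matrix (Fin m) (Fin n) ℝ)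
    (v : Fin m → Bool) :
    ∑ u, isingWt (bipartiteCoupling J) 0 (Fin.append v u) =
      ∏ j, 2 * Real.cosh (∑ i, spin (v i) * J i j) := by
  have h_field (u : Fin n → Bool) : ∑ i, ∑ j, spin (v i) * J i j * spin (u j) =
      ∑ j, (∑ i, spin (v i) * J i j) * spin (u j) := by
    rw [Finset.sum_comm]
    simp only [Finset.sum_mul]
  simp only [isingWt_bipartiteCoupling_append, h_field, Real.exp_sum, ← sum_exp_mul_spin]
  exact (Fintype.prod_sum fun j s => Real.exp ((∑ i, spin (v i) * J i j) * spin s)).symm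

lemma sum_prod_spin {ι : Type*} [Fintype ι] [DecidableEq ι] [Nonempty ι] :
    ∑ v : ι → Bool, ∏ j, spin (v j) = 0 := by
  rw [← Fintype.prod_sum]
  exact Finset.prod_eq_zero (Finset.mem_univ (Classical.arbitrary ι)) (by simp [spin])

def parityGadgetCoupling (b : ℝ) : Matrix (Fin 4) (Fin 4) ℝ :=
  Matrix.of fun i j => if i = j then b else -b

lemma Hb_eq_bipartiteCoupling (b : ℝ) : Hb b = bipartiteCoupling (parityGadgetCoupling b) := by
  ext i j
  fin_cases i <;> fin_cases j <;> rfl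

lemma sum_spin_mul_parityGadgetCoupling (b : ℝ) (v : Fin 4 → Bool) (j : Fin 4) :
    ∑ i, spin (v i) * parityGadgetCoupling b i j = b * (2 * spin (v j) - ∑ i, spin (v i)) := by
  have h_split (i : Fin 4) : parityGadgetCoupling b i j = -b + if i = j then 2 * b else 0 := by
    simp only [parityGadgetCoupling, Matrix.of_apply]
    split_ifs <;> ring
  simp only [h_split, mul_add, Finset.sum_add_distrib, mul_ite, mul_zero, Finset.sum_ite_eq',
    Finset.mem_univ, if_true, ← Finset.sum_mul]
  ring

lemma prod_cosh_parityGadget (b : ℝ) (v : Fin 4 → Bool) :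
    ∏ j, Real.cosh (b * (2 * spin (v j) - ∑ i, spin (v i))) =
      (Real.cosh (2 * b) ^ 4 + Real.cosh (4 * b)) / 2 +
        (Real.cosh (2 * b) ^ 4 - Real.cosh (4 * b)) / 2 * ∏ j, spin (v j) := by
  simp only [Fin.prod_univ_four, Fin.sum_univ_four]
  cases v 0 <;> cases v 1 <;> cases v 2 <;> cases v 3 <;>
    · norm_num [spin]
      ring_nf

lemma sum_isingWt_parityGadget_append (b : ℝ) (v : Fin 4 → Bool) :
    ∑ u, isingWt (bipartiteCoupling (parityGadgetCoupling b)) 0 (Fin.append v u) =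
      16 * ((Real.cosh (2 * b) ^ 4 + Real.cosh (4 * b)) / 2 +
        (Real.cosh (2 * b) ^ 4 - Real.cosh (4 * b)) / 2 * ∏ j, spin (v j)) := by
  rw [sum_isingWt_bipartiteCoupling_append, Finset.prod_mul_distrib]
  simp only [sum_spin_mul_parityGadgetCoupling, prod_cosh_parityGadget]
  norm_num

lemma deltab_eq (b : ℝ) :
    deltab b = (Real.cosh (2 * b) ^ 4 - Real.cosh (4 * b)) /
      (Real.cosh (2 * b) ^ 4 + Real.cosh (4 * b)) := by
  have h_cosh : Real.cosh (4 * b) = Real.cosh (2 * b) ^ 2 + Real.sinh (2 * b) ^ 2 := by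
    rw [← Real.cosh_two_mul]
    ring_nf
  have h_sq := Real.cosh_sq (2 * b)
  rw [deltab, h_cosh]
  congr 1
  · linear_combination -(Real.cosh (2 * b) ^ 2 + Real.sinh (2 * b) ^ 2) * h_sq
  · linear_combination (Real.cosh (2 * b) ^ 2 + Real.sinh (2 * b) ^ 2) * h_sq

/-- For the Ising model on `H_b` with zero biases, the marginal law of
`(X_{v₁},X_{v₂},X_{v₃},X_{v₄})` is `x ↦ (1/16)(1 + δ_b·x₁x₂x₃x₄)`. -/
theorem stmt7 (b : ℝ) (x : Fin 4 → Bool) :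
    isingPr (Hb b) (fun _ => 0)
        (fun σ => ∀ i : Fin 4, σ (Fin.castLE (by norm_num) i) = x i) =
      (1 / 16) * (1 + deltab b * ∏ i : Fin 4, spin (x i)) := by
  rw [Hb_eq_bipartiteCoupling]
  change isingPr _ 0 (fun σ => ∀ i, σ (Fin.castAdd 4 i) = x i) = _
  rw [isingPr_castAdd_eq, sum_pi_fin_add]
  simp only [sum_isingWt_parityGadget_append, ← Finset.mul_sum, Finset.sum_add_distrib,
    sum_prod_spin, Finset.sum_const, Finset.card_univ, Fintype.card_fun,
    Fintype.card_bool, Fintype.card_fin, nsmul_eq_mul]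
  rw [deltab_eq]
  field_simp
  push_cast
  ring
end
end
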